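/- arXiv:1811.08775 — 7 statements merged into one kernel-verified Lean document; each statement's English description precedes it below -/
import Mathlib

section
/- A tower contains no perfect subset: if X ⊆ [ω]^ω is well-ordered by the relation x ≤ y iff y ⊆* x (reverse almost inclusion), then X contains no nonempty perfect set. -/
/-- Cantor space, whose points code subsets of ω. -/
abbrev Cantor : Type := ℕ → Bool

/-- The subset of ω coded by a point of Cantor space. -/
def cset (x : Cantor) : Set ℕ := {n | x n = true}

/-- `a ⊆* b` : almost inclusion. -/
def AlmostSub (a b : Set ℕ) : Prop := (a \ b).Finite

/-!
Almost inclusion `x ⊆* y` is the countable union of the closed relations "`x ⊆ y` above `n`".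
On a nonempty perfect set `Q` of a tower any two distinct points are comparable, so the Baire
category theorem, applied to the off-diagonal pairs of `Q`, gives disjoint open `U`, `V` meeting `Q`
with `(U ∩ Q) × (V ∩ Q)` inside one of these closed relations. Then a point `a ∈ U ∩ Q` lies
strictly above every point of the perfect set `closure (V ∩ Q) ⊆ Q`. If a perfect set lay inside
a tower, a minimal point `a` with a perfect set below it would contradict this step applied to
that set.
-/

open Set Filter Topology

section

variable {α : Type*} [TopologicalSpace α] {Q : Set α}

theorem Perfect.exists_singleton_prod_perfect_subset_of_prod_inter_subset {U V : Set α}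
    (hQ : Perfect Q) (hU : IsOpen U) (hV : IsOpen V) (hUV : Disjoint U V) (hUQ : (U ∩ Q).Nonempty)
    (hVQ : (V ∩ Q).Nonempty) {C : Set (α × α)} (hC : IsClosed C) (hUVC : (U ∩ Q) ×ˢ (V ∩ Q) ⊆ C) :
    ∃ a ∈ Q, ∃ B ⊆ Q, Perfect B ∧ B.Nonempty ∧ a ∉ B ∧ {a} ×ˢ B ⊆ C := by
  obtain ⟨a, haU, haQ⟩ := hUQ
  refine ⟨a, haQ, closure (V ∩ Q), closure_minimal inter_subset_right hQ.closed,
    (hQ.acc.open_inter hV).perfect_closure, hVQ.closure, fun ha => ?_, ?_⟩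
  · obtain ⟨z, hzU, hzV, -⟩ := mem_closure_iff.mp ha U hU haU
    exact disjoint_left.mp hUV hzU hzV
  · rintro ⟨x, b⟩ ⟨hx, hb⟩
    obtain rfl : x = a := hx
    have hVQC : V ∩ Q ⊆ (x, ·) ⁻¹' C := fun _ hy => hUVC (mk_mem_prod ⟨haU, haQ⟩ hy)
    exact closure_minimal hVQC (hC.preimage (Continuous.prodMk_right x)) hb

variable [CompactSpace α] [T2Space α]

theorem Perfect.exists_isOpen_disjoint_prod_inter_subset {ι : Type*} [Countable ι]
    (hQ : Perfect Q) (hne : Q.Nonempty)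
    {F : ι → Set (α × α)} (hF : ∀ i, IsClosed (F i))
    (hcov : ∀ x ∈ Q, ∀ y ∈ Q, x ≠ y → ∃ i, (x, y) ∈ F i) :
    ∃ i, ∃ U V : Set α, IsOpen U ∧ IsOpen V ∧ Disjoint U V ∧ (U ∩ Q).Nonempty ∧
      (V ∩ Q).Nonempty ∧ (U ∩ Q) ×ˢ (V ∩ Q) ⊆ F i := by
  have : CompactSpace Q := isCompact_iff_compactSpace.mp hQ.closed.isCompact
  let Y : Set (Q × Q) := {p | p.1 ≠ p.2}
  have : LocallyCompactSpace Y :=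
    (isOpen_ne_fun continuous_fst continuous_snd).isOpenEmbedding_subtypeVal.locallyCompactSpace
  have : Nonempty Y := by
    obtain ⟨x, hx⟩ := hne
    obtain ⟨y, ⟨-, hy⟩, hyx⟩ := accPt_iff_nhds.mp (hQ.acc x hx) univ univ_mem
    exact ⟨⟨(⟨y, hy⟩, ⟨x, hx⟩), fun h => hyx (congrArg Subtype.val h)⟩⟩
  let g : Y → α × α := fun y => (y.1.1, y.1.2)
  have hg : IsInducing g :=
    (IsInducing.subtypeVal.prodMap IsInducing.subtypeVal).comp IsInducing.subtypeVal
  have hcovY : ⋃ i, g ⁻¹' F i = univ :=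
    eq_univ_of_forall fun y =>
      mem_iUnion.mpr (hcov _ y.1.1.2 _ y.1.2.2 (Subtype.coe_injective.ne y.2))
  obtain ⟨i, y, hy⟩ := nonempty_interior_of_iUnion_of_closed
    (fun i => (hF i).preimage hg.continuous) hcovY
  obtain ⟨W, hW, hWF⟩ := (hg.nhds_eq_comap y ▸ mem_interior_iff_mem_nhds.mp hy)
  obtain ⟨u, v, hu, hpu, hv, hqv, huv⟩ := mem_nhds_prod_iff'.mp hW
  obtain ⟨U₀, V₀, hU₀, hV₀, hpU₀, hqV₀, hdisj⟩ := t2_separation (Subtype.coe_injective.ne y.2)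
  refine ⟨i, u ∩ U₀, v ∩ V₀, hu.inter hU₀, hv.inter hV₀,
    hdisj.mono inter_subset_right inter_subset_right, ⟨_, ⟨hpu, hpU₀⟩, y.1.1.2⟩,
    ⟨_, ⟨hqv, hqV₀⟩, y.1.2.2⟩, ?_⟩
  rintro ⟨x, z⟩ ⟨⟨⟨hxu, hxU₀⟩, hxQ⟩, ⟨⟨hzv, hzV₀⟩, hzQ⟩⟩
  have hxz : x ≠ z := hdisj.ne_of_mem hxU₀ hzV₀
  exact hWF (show g ⟨(⟨x, hxQ⟩, ⟨z, hzQ⟩), fun h => hxz (congrArg Subtype.val h)⟩ ∈ W from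
    huv ⟨hxu, hzv⟩)

theorem Perfect.exists_singleton_prod_perfect_subset {ι : Type*} [Countable ι]
    (hQ : Perfect Q) (hne : Q.Nonempty)
    {F : ι → Set (α × α)} (hF : ∀ i, IsClosed (F i))
    (hcov : ∀ x ∈ Q, ∀ y ∈ Q, x ≠ y → ∃ i, (x, y) ∈ F i ∨ (y, x) ∈ F i) :
    ∃ i, ∃ a ∈ Q, ∃ B ⊆ Q, Perfect B ∧ B.Nonempty ∧ a ∉ B ∧ {a} ×ˢ B ⊆ F i := by
  let G : ι ⊕ ι → Set (α × α) := Sum.elim F fun i => Prod.swap ⁻¹' F i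
  have hG : ∀ j, IsClosed (G j) := by
    rintro (i | i)
    exacts [hF i, (hF i).preimage continuous_swap]
  have hcovG : ∀ x ∈ Q, ∀ y ∈ Q, x ≠ y → ∃ j, (x, y) ∈ G j := fun x hx y hy hxy => by
    obtain ⟨i, h | h⟩ := hcov x hx y hy hxy
    exacts [⟨.inl i, h⟩, ⟨.inr i, h⟩]
  obtain ⟨j | j, U, V, hU, hV, hUV, hUQ, hVQ, hUVG⟩ :=
    hQ.exists_isOpen_disjoint_prod_inter_subset hne hG hcovG
  · exact ⟨j, hQ.exists_singleton_prod_perfect_subset_of_prod_inter_subset hU hV hUV hUQ hVQ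
      (hF j) hUVG⟩
  · refine ⟨j, hQ.exists_singleton_prod_perfect_subset_of_prod_inter_subset hV hU hUV.symm hVQ
      hUQ (hF j) ?_⟩
    rw [← preimage_swap_prod]
    exact preimage_mono hUVG

end

def almostSubFrom (n : ℕ) : Set (Cantor × Cantor) :=
  {p | ∀ m, n ≤ m → p.1 m = true → p.2 m = true}

theorem isClosed_almostSubFrom (n : ℕ) : IsClosed (almostSubFrom n) := by
  simp only [almostSubFrom, ofPred_forall]
  refine isClosed_iInter fun m => isClosed_iInter fun _ => ?_
  exact (isClosed_discrete {q : Bool × Bool | q.1 = true → q.2 = true}).preimage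
    (f := fun p : Cantor × Cantor => (p.1 m, p.2 m)) (by fun_prop)

theorem almostSub_cset_iff_exists_almostSubFrom (x y : Cantor) :
    AlmostSub (cset x) (cset y) ↔ ∃ n, (x, y) ∈ almostSubFrom n := by
  refine ⟨fun h => ?_, fun ⟨n, hn⟩ => ?_⟩
  · obtain ⟨N, hN⟩ := h.bddAbove
    refine ⟨N + 1, fun m hm hxm => ?_⟩
    by_contra hym
    exact absurd (hN ⟨hxm, hym⟩) (by omega)
  · refine (finite_Iio n).subset fun m ⟨hxm, hym⟩ => ?_
    by_contra hmn
    exact hym (hn m (not_lt.mp hmn) hxm)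

def TowerLT (x y : Cantor) : Prop :=
  AlmostSub (cset y) (cset x) ∧ ¬ AlmostSub (cset x) (cset y)

theorem Perfect.exists_perfect_subset_towerLT {Q : Set Cantor} (hQ : Perfect Q)
    (hne : Q.Nonempty) (htri : ∀ x ∈ Q, ∀ y ∈ Q, x ≠ y → TowerLT x y ∨ TowerLT y x) :
    ∃ a ∈ Q, ∃ B ⊆ Q, Perfect B ∧ B.Nonempty ∧ ∀ b ∈ B, TowerLT b a := by
  have hcov : ∀ x ∈ Q, ∀ y ∈ Q, x ≠ y →
      ∃ n, (x, y) ∈ almostSubFrom n ∨ (y, x) ∈ almostSubFrom n := fun x hx y hy hxy => by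
    rcases htri x hx y hy hxy with h | h
    · obtain ⟨n, hn⟩ := (almostSub_cset_iff_exists_almostSubFrom y x).mp h.1
      exact ⟨n, .inr hn⟩
    · obtain ⟨n, hn⟩ := (almostSub_cset_iff_exists_almostSubFrom x y).mp h.1
      exact ⟨n, .inl hn⟩
  obtain ⟨n, a, haQ, B, hBQ, hB, hBne, haB, haBn⟩ :=
    hQ.exists_singleton_prod_perfect_subset hne isClosed_almostSubFrom hcov
  refine ⟨a, haQ, B, hBQ, hB, hBne, fun b hb => ?_⟩
  have hab : AlmostSub (cset a) (cset b) :=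
    (almostSub_cset_iff_exists_almostSubFrom a b).mpr ⟨n, haBn (mk_mem_prod rfl hb)⟩
  exact (htri a haQ b (hBQ hb) (ne_of_mem_of_not_mem hb haB).symm).resolve_left
    fun h => h.2 hab

theorem tower_no_perfect_general (X : Set Cantor)
    (hwo : IsWellOrder X (fun a b =>
      AlmostSub (cset b.1) (cset a.1) ∧ ¬ AlmostSub (cset a.1) (cset b.1)))
    (P : Set Cantor) (hPne : P.Nonempty) (hP : Perfect P) :
    ¬ P ⊆ X := by
  intro hPX
  have htri : ∀ x ∈ X, ∀ y ∈ X, x ≠ y → TowerLT x y ∨ TowerLT y x := fun x hx y hy hxy =>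
    or_iff_not_and_not.mpr fun h =>
      hxy (congrArg Subtype.val (hwo.trichotomous ⟨x, hx⟩ ⟨y, hy⟩ h.1 h.2))
  let S : Set X := {a | ∃ B ⊆ X, Perfect B ∧ B.Nonempty ∧ ∀ b ∈ B, TowerLT b a}
  have hS : ∀ Q ⊆ X, Perfect Q → Q.Nonempty → ∃ a ∈ S, a.1 ∈ Q := fun Q hQX hQ hQne => by
    obtain ⟨a, haQ, B, hBQ, hB, hBne, hBa⟩ :=
      hQ.exists_perfect_subset_towerLT hQne fun x hx y hy => htri x (hQX hx) y (hQX hy)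
    exact ⟨⟨a, hQX haQ⟩, ⟨B, hBQ.trans hQX, hB, hBne, hBa⟩, haQ⟩
  obtain ⟨a₀, ha₀S, -⟩ := hS P hPX hP hPne
  obtain ⟨a, ⟨B, hBX, hB, hBne, hBa⟩, hmin⟩ := hwo.wf.has_min S ⟨a₀, ha₀S⟩
  obtain ⟨b, hbS, hbB⟩ := hS B hBX hB hBne
  exact hmin b hbS (hBa b hbB)

/-- A tower contains no nonempty perfect set: if `X ⊆ [ω]^ω` is well ordered by the
relation `x ≤ y` iff `y ⊆* x` (formalized via its strict part being a well order),
then no nonempty perfect set is contained in `X`. -/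
theorem tower_no_perfect (X : Set Cantor)
    (hinf : ∀ x ∈ X, (cset x).Infinite)
    (hwo : IsWellOrder X (fun a b =>
      AlmostSub (cset b.1) (cset a.1) ∧ ¬ AlmostSub (cset a.1) (cset b.1)))
    (P : Set Cantor) (hPne : P.Nonempty) (hP : Perfect P) :
    ¬ P ⊆ X :=
  tower_no_perfect_general X hwo P hPne hP
end

section
/- Diagonalization lemma for towers with coding: suppose z ∈ 2^ω, y ∈ [ω]^ω, and ⟨x_α : α < γ⟩ is a countable tower (γ < ω₁) such that each x_α meets both the odd numbers O and the even numbers E infinitely. Then there exists x ∈ [ω]^ω with x ⊆* x_α for all α < γ, |x ∩ O| = ω, |x ∩ E| = ω, z is Turing-reducible to x, and y ∩ (ω \ x) is infinite. -/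
open Set Filter

lemma Nat.nth_mem_range_of_strictMono {a : ℕ → ℕ} (ha : StrictMono a) :
    Nat.nth (· ∈ range a) = a := by
  have hinf : (range a).Infinite := infinite_range_of_injective ha.injective
  exact ((Nat.nth_strictMono hinf).range_inj ha).1 (Nat.range_nth_of_infinite hinf)

lemma Nat.frequently_bodd_eq (b : Bool) : ∃ᶠ n in atTop, Nat.bodd n = b :=
  frequently_atTop.2 fun N => ⟨Nat.bit b N, by cases b <;> simp [Nat.bit] <;> omega,
    Nat.bodd_bit b N⟩

lemma infinite_range_inter_of_frequently {a : ℕ → ℕ} (ha : Function.Injective a)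
    {p : ℕ → Prop} (h : ∃ᶠ n in atTop, p (a n)) : (range a ∩ {m | p m}).Infinite :=
  ((Nat.frequently_atTop_iff_infinite.1 h).image ha.injOn).mono <| by
    rintro _ ⟨n, hn, rfl⟩
    exact ⟨⟨n, rfl⟩, hn⟩

lemma exists_strictMono_mem_infinite_diff_range {S : ℕ → Set ℕ} (hS : ∀ n, (S n).Infinite)
    {y : Set ℕ} (hy : y.Infinite) :
    ∃ a : ℕ → ℕ, StrictMono a ∧ (∀ n, a n ∈ S n) ∧ (y \ range a).Infinite := by
  choose next hnext_mem hnext_gt using fun M => hy.exists_gt M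
  choose pick hpick_mem hpick_gt using fun n M => (hS n).exists_gt M
  let a : ℕ → ℕ := fun n => Nat.rec (pick 0 0) (fun n an => pick (n + 1) (next an)) n
  have h_lt_next (n : ℕ) : a n < next (a n) := hnext_gt _
  have h_next_lt (n : ℕ) : next (a n) < a (n + 1) := hpick_gt _ _
  have ha : StrictMono a := strictMono_nat_of_lt_succ fun n => (h_lt_next n).trans (h_next_lt n)
  have hgap : StrictMono (next ∘ a) :=
    strictMono_nat_of_lt_succ fun n => (h_next_lt n).trans (h_lt_next (n + 1))
  refine ⟨a, ha, fun n => ?_, (infinite_range_of_injective hgap.injective).mono ?_⟩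
  · cases n
    exacts [hpick_mem 0 0, hpick_mem _ _]
  · rintro _ ⟨n, rfl⟩
    refine ⟨hnext_mem _, fun ⟨k, hk⟩ => ?_⟩
    rcases le_or_gt k n with hkn | hnk
    · exact (ha.monotone hkn).not_gt (hk ▸ h_lt_next n)
    · exact ((h_next_lt n).trans_le (ha.monotone hnk)).ne' hk

section Tower

variable {ι : Type*} {r : ι → ι → Prop} {x : ι → Set ℕ}

lemma exists_almostSub_biInter_of_tower [IsStrictTotalOrder ι r]
    (htower : ∀ i j, r i j → AlmostSub (x j) (x i)) {s : Set ι} (hs : s.Finite)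
    (hne : s.Nonempty) : ∃ j, AlmostSub (x j) (⋂ i ∈ s, x i) := by
  classical
  let := linearOrderOfSTO r
  obtain ⟨j, -, hj⟩ := s.exists_max_image id hs hne
  refine ⟨j, (hs.biUnion (t := fun i => x j \ x i) fun i hi => ?_).subset ?_⟩
  · rcases (hj i hi).lt_or_eq with hij | rfl
    exacts [htower i j hij, by simp]
  · intro m ⟨hmj, hm⟩
    simpa [hmj] using hm

lemma infinite_biInter_inter_of_tower [IsStrictTotalOrder ι r]
    (htower : ∀ i j, r i j → AlmostSub (x j) (x i)) {S : Set ℕ} (hS₀ : S.Infinite)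
    (hS : ∀ i, (x i ∩ S).Infinite) {s : Set ι} (hs : s.Finite) :
    ((⋂ i ∈ s, x i) ∩ S).Infinite := by
  rcases s.eq_empty_or_nonempty with rfl | hne
  · simpa using hS₀
  obtain ⟨j, hj⟩ := exists_almostSub_biInter_of_tower htower hs hne
  refine ((hS j).sdiff hj).mono ?_
  rintro m ⟨⟨hmj, hmS⟩, hm⟩
  exact ⟨by_contra fun h => hm ⟨hmj, h⟩, hmS⟩

lemma exists_strictMono_parity_eq_of_tower [Countable ι] [IsStrictTotalOrder ι r]
    (htower : ∀ i j, r i j → AlmostSub (x j) (x i))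
    (hO : ∀ i, (x i ∩ {n | Odd n}).Infinite) (hE : ∀ i, (x i ∩ {n | Even n}).Infinite)
    (c : ℕ → Bool) {y : Set ℕ} (hy : y.Infinite) :
    ∃ a : ℕ → ℕ, StrictMono a ∧ (∀ n, Odd (a n) ↔ c n = false) ∧
      (∀ i, AlmostSub (range a) (x i)) ∧ (y \ range a).Infinite := by
  obtain ⟨e, he⟩ := Countable.exists_injective_nat ι
  let parity (b : Bool) : Set ℕ := {m | Odd m ↔ b = false}
  have hparity (b : Bool) : (parity b).Infinite :=
    infinite_of_forall_exists_gt fun N =>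
      ⟨2 * (N + 1) + (!b).toNat, by cases b <;> simp [parity, parity_simps], by omega⟩
  have hx_parity (b : Bool) (i : ι) : (x i ∩ parity b).Infinite := by
    cases b
    · simpa [parity] using hO i
    · simpa [parity] using hE i
  obtain ⟨a, ha, ha_mem, hy_diff⟩ :=
    exists_strictMono_mem_infinite_diff_range
      (S := fun n => (⋂ i ∈ {i | e i < n}, x i) ∩ parity (c n))
      (fun n => infinite_biInter_inter_of_tower htower (hparity _) (hx_parity _)
        ((finite_Iio n).preimage he.injOn)) hy
  refine ⟨a, ha, fun n => (ha_mem n).2, fun i => ?_, hy_diff⟩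
  refine ((finite_Iic (e i)).image a).subset ?_
  rintro _ ⟨⟨k, rfl⟩, hk⟩
  refine ⟨k, mem_Iic.2 (not_lt.1 fun hik => hk ?_), rfl⟩
  exact mem_iInter₂.1 (ha_mem k).1 i hik

lemma exists_coding_of_tower [Countable ι] [IsStrictTotalOrder ι r]
    (htower : ∀ i j, r i j → AlmostSub (x j) (x i))
    (hO : ∀ i, (x i ∩ {n | Odd n}).Infinite) (hE : ∀ i, (x i ∩ {n | Even n}).Infinite)
    {c : ℕ → Bool} (hc : ∀ b, ∃ᶠ n in atTop, c n = b) {y : Set ℕ} (hy : y.Infinite) :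
    ∃ w : Set ℕ, w.Infinite ∧ (∀ i, AlmostSub w (x i)) ∧ (w ∩ {n | Odd n}).Infinite ∧
      (w ∩ {n | Even n}).Infinite ∧ (∀ i, c i = false ↔ Odd (Nat.nth (· ∈ w) i)) ∧
      (y \ w).Infinite := by
  obtain ⟨a, ha, hpar, hsub, hy_diff⟩ := exists_strictMono_parity_eq_of_tower htower hO hE c hy
  refine ⟨range a, infinite_range_of_injective ha.injective, hsub,
    infinite_range_inter_of_frequently ha.injective ((hc false).mono fun n hn => (hpar n).2 hn),
    infinite_range_inter_of_frequently ha.injective ((hc true).mono fun n hn => ?_),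
    fun n => ?_, hy_diff⟩
  · exact Nat.not_odd_iff_even.1 (by simp [hpar, hn])
  · rw [Nat.nth_mem_range_of_strictMono ha]
    exact (hpar n).symm

end Tower

theorem tower_diagonalization_with_coding_general
    (z : ℕ → Bool) (y : Set ℕ) (hy : y.Infinite)
    (ι : Type) [Countable ι] (r : ι → ι → Prop) (hwo : IsWellOrder ι r)
    (x : ι → Set ℕ)
    (htower : ∀ i j, r i j → AlmostSub (x j) (x i))
    (hO : ∀ i, (x i ∩ {n | Odd n}).Infinite)
    (hE : ∀ i, (x i ∩ {n | Even n}).Infinite) :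
    ∃ w : Set ℕ, w.Infinite ∧
      (∀ i, AlmostSub w (x i)) ∧
      (w ∩ {n | Odd n}).Infinite ∧
      (w ∩ {n | Even n}).Infinite ∧
      ((∃ N b, ∀ i ≥ N, z i = b) ∨ ∀ i, (z i = false ↔ Odd (Nat.nth (· ∈ w) i))) ∧
      (y \ w).Infinite := by
  have := hwo
  by_cases hconst : ∃ N b, ∀ i ≥ N, z i = b
  · obtain ⟨w, hw, hsub, hodd, heven, -, hy_diff⟩ :=
      exists_coding_of_tower htower hO hE Nat.frequently_bodd_eq hy
    exact ⟨w, hw, hsub, hodd, heven, Or.inl hconst, hy_diff⟩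
  · have hz (b : Bool) : ∃ᶠ n in atTop, z n = b := by
      push Not at hconst
      refine frequently_atTop.2 fun N => ?_
      obtain ⟨n, hn, hzn⟩ := hconst N (!b)
      exact ⟨n, hn, by simpa using hzn⟩
    obtain ⟨w, hw, hsub, hodd, heven, hcode, hy_diff⟩ :=
      exists_coding_of_tower htower hO hE hz hy
    exact ⟨w, hw, hsub, hodd, heven, Or.inr hcode, hy_diff⟩

/-- Diagonalization lemma for towers with coding: given `z ∈ 2^ω`, `y ∈ [ω]^ω` and a
countable tower `⟨x_i⟩` (indexed by a countable well order) each member of which meets the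
odds `O` and the evens `E` infinitely, there is `x ∈ [ω]^ω` almost contained in every `x_i`,
meeting `O` and `E` infinitely, with `y \ x` infinite, and coding `z` (so `z ≤_T x`):
unless `z` is eventually constant (in which case `z` is trivially computable), the `i`-th
element of `x` is odd iff `z i = 0`. -/
theorem tower_diagonalization_with_coding
    (z : ℕ → Bool) (y : Set ℕ) (hy : y.Infinite)
    (ι : Type) [Countable ι] (r : ι → ι → Prop) (hwo : IsWellOrder ι r)
    (x : ι → Set ℕ)
    (hinf : ∀ i, (x i).Infinite)
    (htower : ∀ i j, r i j → AlmostSub (x j) (x i))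
    (hO : ∀ i, (x i ∩ {n | Odd n}).Infinite)
    (hE : ∀ i, (x i ∩ {n | Even n}).Infinite) :
    ∃ w : Set ℕ, w.Infinite ∧
      (∀ i, AlmostSub w (x i)) ∧
      (w ∩ {n | Odd n}).Infinite ∧
      (w ∩ {n | Even n}).Infinite ∧
      ((∃ N b, ∀ i ≥ N, z i = b) ∨ ∀ i, (z i = false ↔ Odd (Nat.nth (· ∈ w) i))) ∧
      (y \ w).Infinite :=
  tower_diagonalization_with_coding_general z y hy ι r hwo x htower hO hE
end

section
/- If p = c, then for any collection P of at most continuum many proper forcing posets each of size at most continuum, there exists a maximal tower of length c that remains maximal (has no pseudointersection) in any forcing extension by a poset from P. -/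
/-- The pseudointersection number `𝔭`: the least cardinality of a family of subsets of `ω`
with the finite intersection property but no pseudointersection. -/
noncomputable def pseudoNumber : Cardinal :=
  sInf { c : Cardinal | ∃ F : Set (Set ℕ), Cardinal.mk F = c ∧
    (∀ G : Finset (Set ℕ), ↑G ⊆ F → (⋂ a ∈ (G : Set (Set ℕ)), a).Infinite) ∧
    ¬ ∃ z : Set ℕ, z.Infinite ∧ ∀ a ∈ F, AlmostSub z a }

section Forcing

variable {Q : Type} [Preorder Q]

/-- `A` is an antichain in the forcing poset `Q` (pairwise incompatible). -/
def IsForcingAntichain (A : Set Q) : Prop :=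
  ∀ p ∈ A, ∀ q ∈ A, p ≠ q → ¬ ∃ s, s ≤ p ∧ s ≤ q

/-- `q` forces `m ∈ ẏ`, where the nice name `ẏ` is given by antichains `A n`:
densely below `q` every condition lies below some member of `A m`. -/
def forcesMem (q : Q) (A : ℕ → Set Q) (m : ℕ) : Prop :=
  ∀ r, r ≤ q → ∃ s, s ≤ r ∧ ∃ p ∈ A m, s ≤ p

/-- `p` forces that the name `ẏ` denotes an infinite subset of `ω`. -/
def forcesInfinite (p : Q) (A : ℕ → Set Q) : Prop :=
  ∀ n, ∀ r, r ≤ p → ∃ s, s ≤ r ∧ ∃ m, n ≤ m ∧ forcesMem s A m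

/-- `q` forces `ẏ ⊄* x`: densely below `q` one forces arbitrarily large elements of
`ẏ` outside `x`. -/
def forcesNotAlmostSub (q : Q) (A : ℕ → Set Q) (x : Set ℕ) : Prop :=
  ∀ n, ∀ r, r ≤ q → ∃ s, s ≤ r ∧ ∃ m, n ≤ m ∧ m ∉ x ∧ forcesMem s A m

end Forcing

/-! Build the tower by a recursion of length `𝔠` in which each of the `𝔠` many tasks is met
at some stage: an infinite ground-model set `z` must escape some member of the tower, and for
every poset `P i`, countable nice name `ẏ` and condition `p` forcing `ẏ` infinite, some `q ≤ p`
must force `ẏ` out of some member of the tower. Since `𝔭 = 𝔠`, the fewer than `𝔠` sets chosen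
so far have an infinite pseudointersection `y`. Split `y` into two infinite halves `w` and
`y \ w`. If `ẏ` is forced to meet `w` infinitely often, then `y \ w` is forced not to almost
contain `ẏ`; otherwise some `q ≤ p` forces `ẏ ∩ w` finite, and then `q` forces `ẏ` out of `w`. -/

open Cardinal Set

theorem Set.Infinite.exists_split {α : Type*} {s : Set α} (hs : s.Infinite) :
    ∃ t ⊆ s, t.Infinite ∧ (s \ t).Infinite := by
  set f : ℕ → α := fun n => hs.natEmbedding s n
  have hf : f.Injective := fun a b h => hs.natEmbedding s |>.injective (Subtype.ext h)
  have hfs : ∀ n, f n ∈ s := fun n => (hs.natEmbedding s n).2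
  refine ⟨range fun k => f (2 * k), ?_, ?_, ?_⟩
  · rintro _ ⟨k, rfl⟩
    exact hfs _
  · exact infinite_range_of_injective fun a b (h : f (2 * a) = f (2 * b)) => by
      have := hf h; omega
  · refine (infinite_range_of_injective fun a b (h : f (2 * a + 1) = f (2 * b + 1)) => by
      have := hf h; omega).mono ?_
    rintro _ ⟨k, rfl⟩
    refine ⟨hfs _, ?_⟩
    rintro ⟨k', hk'⟩
    have := hf hk'
    omega

theorem AlmostSub.of_subset {x y a : Set ℕ} (hxy : x ⊆ y) (h : AlmostSub y a) :
    AlmostSub x a :=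
  h.subset (sdiff_subset_sdiff_left hxy)

theorem AlmostSub.infinite {a b : Set ℕ} (h : AlmostSub a b) (ha : a.Infinite) :
    b.Infinite :=
  (ha.sdiff h).mono fun _ hm => by_contra fun hb => hm.2 ⟨hm.1, hb⟩

theorem almostSub_biInter {a : Set ℕ} {G : Set (Set ℕ)} (hG : G.Finite)
    (h : ∀ b ∈ G, AlmostSub a b) : AlmostSub a (⋂ b ∈ G, b) := by
  simp only [AlmostSub, sdiff_iInter]
  exact hG.biUnion h

theorem biInter_infinite_of_almostSub_antitone {ι : Type*} [LinearOrder ι] {x : ι → Set ℕ}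
    (hinf : ∀ i, (x i).Infinite) (hanti : ∀ i j, i < j → AlmostSub (x j) (x i))
    (G : Finset (Set ℕ)) (hG : ↑G ⊆ range x) : (⋂ a ∈ (G : Set (Set ℕ)), a).Infinite := by
  classical
  obtain ⟨S, -, rfl⟩ := Finset.subset_set_image_iff.1 (image_univ (f := x) ▸ hG)
  rcases S.eq_empty_or_nonempty with rfl | hS
  · simpa using infinite_univ
  refine AlmostSub.infinite (almostSub_biInter (Finset.finite_toSet _) ?_) (hinf (S.max' hS))
  simp only [Finset.coe_image, mem_image, Finset.mem_coe, forall_exists_index, and_imp,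
    forall_apply_eq_imp_iff₂]
  intro i hi
  rcases (S.le_max' i hi).lt_or_eq with h | h
  · exact hanti _ _ h
  · rw [h]
    simp [AlmostSub]

theorem exists_pseudointersection_of_mk_lt_pseudoNumber {F : Set (Set ℕ)}
    (hF : #F < pseudoNumber)
    (hfip : ∀ G : Finset (Set ℕ), ↑G ⊆ F → (⋂ a ∈ (G : Set (Set ℕ)), a).Infinite) :
    ∃ z : Set ℕ, z.Infinite ∧ ∀ a ∈ F, AlmostSub z a := by
  by_contra h
  exact hF.not_ge (csInf_le' ⟨F, rfl, hfip, h⟩)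

theorem exists_infinite_subset_not_almostSub {y z : Set ℕ} (hy : y.Infinite) (hz : z.Infinite) :
    ∃ x ⊆ y, x.Infinite ∧ ¬ AlmostSub z x := by
  obtain ⟨w, hwy, hw, hyw⟩ := hy.exists_split
  have hz' : z \ w ∪ z \ (y \ w) = z := by
    rw [← sdiff_inter, inter_sdiff_self, sdiff_empty]
  by_cases h : AlmostSub z w
  · refine ⟨y \ w, sdiff_subset, hyw, fun h' => hz ?_⟩
    rw [← hz']
    exact h.union h'
  · exact ⟨w, hwy, hw, h⟩

section Forcing

variable {Q : Type} [Preorder Q]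

/-- The values of the nice name `A` that the condition `r` does not rule out. -/
def possibleValues (A : ℕ → Set Q) (r : Q) : Set ℕ := {m | ∃ s ∈ A m, ∃ u, u ≤ r ∧ u ≤ s}

theorem possibleValues_anti {A : ℕ → Set Q} {r r' : Q} (h : r' ≤ r) :
    possibleValues A r' ⊆ possibleValues A r := by
  rintro m ⟨s, hs, u, hur', hus⟩
  exact ⟨s, hs, u, hur'.trans h, hus⟩

theorem forcesMem_of_le {A : ℕ → Set Q} {m : ℕ} {s u : Q} (hs : s ∈ A m) (h : u ≤ s) :
    forcesMem u A m :=
  fun r hr => ⟨r, le_rfl, s, hs, hr.trans h⟩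

theorem possibleValues_infinite {A : ℕ → Set Q} {p r : Q} (hp : forcesInfinite p A)
    (hr : r ≤ p) : (possibleValues A r).Infinite := by
  refine infinite_of_forall_exists_gt fun n => ?_
  obtain ⟨s, hsr, m, hnm, hm⟩ := hp (n + 1) r hr
  obtain ⟨u, hus, t, ht, hut⟩ := hm s le_rfl
  exact ⟨m, ⟨t, ht, u, hus.trans hsr, hut⟩, hnm⟩

theorem forcesNotAlmostSub_of_infinite_sdiff {A : ℕ → Set Q} {q : Q} {x : Set ℕ}
    (h : ∀ r ≤ q, (possibleValues A r \ x).Infinite) : forcesNotAlmostSub q A x := by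
  intro n r hr
  obtain ⟨m, ⟨⟨s, hs, u, hur, hus⟩, hmx⟩, hnm⟩ := (h r hr).exists_gt n
  exact ⟨u, hur, m, hnm.le, hmx, forcesMem_of_le hs hus⟩

theorem exists_infinite_subset_forcesNotAlmostSub {A : ℕ → Set Q} {p : Q}
    (hp : forcesInfinite p A) {y : Set ℕ} (hy : y.Infinite) :
    ∃ x ⊆ y, x.Infinite ∧ ∃ q ≤ p, forcesNotAlmostSub q A x := by
  obtain ⟨w, hwy, hw, hyw⟩ := hy.exists_split
  by_cases hmeet : ∀ r ≤ p, (possibleValues A r ∩ w).Infinite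
  · refine ⟨y \ w, sdiff_subset, hyw, p, le_rfl, forcesNotAlmostSub_of_infinite_sdiff ?_⟩
    exact fun r hr => (hmeet r hr).mono fun m hm => ⟨hm.1, fun hm' => hm'.2 hm.2⟩
  · push Not at hmeet
    obtain ⟨q, hqp, hq⟩ := hmeet
    refine ⟨w, hwy, hw, q, hqp, forcesNotAlmostSub_of_infinite_sdiff fun r hr => ?_⟩
    refine ((possibleValues_infinite hp (hr.trans hqp)).sdiff hq).mono ?_
    exact fun m hm => ⟨hm.1, fun hmw => hm.2 ⟨possibleValues_anti hr hm.1, hmw⟩⟩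

end Forcing

section Recursion

variable {ι : Type} [LinearOrder ι] [WellFoundedLT ι]

noncomputable def towerRec (Q : ι → Set ℕ → Prop) : ι → Set ℕ :=
  wellFounded_lt.fix fun α x => Classical.epsilon fun z : Set ℕ =>
    z.Infinite ∧ (∀ β (hβ : β < α), AlmostSub z (x β hβ)) ∧ Q α z

theorem towerRec_spec (hι : ∀ α : ι, #(Iio α) < pseudoNumber) {Q : ι → Set ℕ → Prop}
    (hQ : ∀ α y, y.Infinite → ∃ x ⊆ y, x.Infinite ∧ Q α x) (α : ι) :
    (towerRec Q α).Infinite ∧ (∀ β < α, AlmostSub (towerRec Q α) (towerRec Q β)) ∧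
      Q α (towerRec Q α) := by
  induction α using WellFoundedLT.induction with
  | ind α ih =>
    have hfip := biInter_infinite_of_almostSub_antitone (fun β : Iio α => (ih β β.2).1)
      (fun β γ h => (ih γ γ.2).2.1 β h)
    obtain ⟨y, hy, hyF⟩ := exists_pseudointersection_of_mk_lt_pseudoNumber
      (mk_range_le.trans_lt (hι α)) hfip
    obtain ⟨x, hxy, hx, hQx⟩ := hQ α y hy
    have hex : ∃ z : Set ℕ, z.Infinite ∧ (∀ β (_ : β < α), AlmostSub z (towerRec Q β)) ∧ Q α z :=
      ⟨x, hx, fun β hβ => (hyF _ ⟨⟨β, hβ⟩, rfl⟩).of_subset hxy, hQx⟩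
    rw [towerRec, wellFounded_lt.fix_eq]
    exact Classical.epsilon_spec hex

end Recursion

theorem mk_countable_sets_le_continuum {X : Type*} (h : #X ≤ 𝔠) :
    #{s : Set X // s.Countable} ≤ 𝔠 :=
  calc #{s : Set X // s.Countable} = #{s : Set X // #s ≤ ℵ₀} := by
        simp only [le_aleph0_iff_set_countable]
    _ ≤ max #X ℵ₀ ^ ℵ₀ := mk_bounded_set_le X ℵ₀
    _ ≤ 𝔠 ^ ℵ₀ := power_le_power_right (max_le h aleph0_le_continuum)
    _ = 𝔠 := continuum_power_aleph0

theorem mk_nat_arrow_le_continuum {Y : Type} (h : #Y ≤ 𝔠) : #(ℕ → Y) ≤ 𝔠 := by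
  rw [mk_arrow, lift_id, lift_id, mk_nat, ← continuum_power_aleph0]
  exact power_le_power_right h

/-- Only nice names with countable antichains are tasks, so that there are just `𝔠` many. -/
def TowerTask (I : Type) (P : I → Type) : Type :=
  Set ℕ ⊕ Σ i, (ℕ → {s : Set (P i) // s.Countable}) × P i

namespace TowerTask

variable {I : Type} {P : I → Type}

def Done [∀ i, Preorder (P i)] : TowerTask I P → Set ℕ → Prop
  | Sum.inl z, x => z.Infinite → ¬ AlmostSub z x
  | Sum.inr ⟨_, A, p⟩, x => forcesInfinite p (fun n => (A n).1) →
      ∃ q ≤ p, forcesNotAlmostSub q (fun n => (A n).1) x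

theorem exists_done [∀ i, Preorder (P i)] (t : TowerTask I P) {y : Set ℕ} (hy : y.Infinite) :
    ∃ x ⊆ y, x.Infinite ∧ t.Done x := by
  rcases t with z | ⟨i, A, p⟩
  · by_cases hz : z.Infinite
    · obtain ⟨x, hxy, hx, hzx⟩ := exists_infinite_subset_not_almostSub hy hz
      exact ⟨x, hxy, hx, fun _ => hzx⟩
    · exact ⟨y, subset_rfl, hy, fun h => absurd h hz⟩
  · by_cases hp : forcesInfinite p (fun n => (A n).1)
    · obtain ⟨x, hxy, hx, hq⟩ := exists_infinite_subset_forcesNotAlmostSub hp hy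
      exact ⟨x, hxy, hx, fun _ => hq⟩
    · exact ⟨y, subset_rfl, hy, fun h => absurd h hp⟩

theorem mk_le_continuum (hI : #I ≤ 𝔠) (hP : ∀ i, #(P i) ≤ 𝔠) : #(TowerTask I P) ≤ 𝔠 := by
  have hname : ∀ i, #((ℕ → {s : Set (P i) // s.Countable}) × P i) ≤ 𝔠 := fun i => by
    rw [mk_prod, lift_id, lift_id, ← continuum_mul_self]
    exact mul_le_mul' (mk_nat_arrow_le_continuum (mk_countable_sets_le_continuum (hP i))) (hP i)
  calc #(TowerTask I P)
      = #(Set ℕ) + sum fun i => #((ℕ → {s : Set (P i) // s.Countable}) × P i) := by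
        rw [TowerTask, mk_sum, lift_id, lift_id, mk_sigma]
    _ ≤ 𝔠 + #I * 𝔠 := add_le_add mk_set_nat.le ((sum_le_sum _ _ hname).trans_eq (sum_const' I 𝔠))
    _ ≤ 𝔠 + 𝔠 * 𝔠 := by gcongr
    _ = 𝔠 := by rw [continuum_mul_self, continuum_add_self]

end TowerTask

/-- If `𝔭 = 𝔠`, then for any collection of at most continuum many (proper) posets, each of
size at most continuum, there is a maximal tower of length `𝔠` that stays maximal after
forcing with any poset from the collection: for every nice name `ẏ` (given by countable
antichains, as properness provides) for an infinite subset of `ω` and every condition `p`,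
some `q ≤ p` forces `ẏ` not to be almost contained in some member of the tower. -/
theorem indestructible_maximal_tower
    (hp : pseudoNumber = Cardinal.continuum)
    (I : Type) (hI : Cardinal.mk I ≤ Cardinal.continuum)
    (P : I → Type) [∀ i, Preorder (P i)]
    (hP : ∀ i, Cardinal.mk (P i) ≤ Cardinal.continuum) :
    ∃ (ι : Type) (r : ι → ι → Prop), IsWellOrder ι r ∧
      Cardinal.mk ι = Cardinal.continuum ∧
      ∃ x : ι → Set ℕ,
        (∀ j, (x j).Infinite) ∧
        (∀ j k, r j k → AlmostSub (x k) (x j)) ∧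
        (¬ ∃ z : Set ℕ, z.Infinite ∧ ∀ j, AlmostSub z (x j)) ∧
        ∀ i : I, ∀ A : ℕ → Set (P i),
          (∀ n, (A n).Countable) → (∀ n, IsForcingAntichain (A n)) →
          ∀ p : P i, forcesInfinite p A →
            ∃ q, q ≤ p ∧ ∃ j, forcesNotAlmostSub q A (x j) := by
  obtain ⟨emb⟩ : #(TowerTask I P) ≤ #(ord 𝔠).ToType :=
    (mk_ord_toType 𝔠).symm ▸ TowerTask.mk_le_continuum hI hP
  have : Nonempty (TowerTask I P) := ⟨Sum.inl ∅⟩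
  set e := Function.invFun emb
  have he : e.Surjective := Function.invFun_surjective emb.injective
  have hι : ∀ α : (ord 𝔠).ToType, #(Iio α) < pseudoNumber := fun α =>
    (mk_Iio_lt α (by simp)).trans_eq ((mk_ord_toType 𝔠).trans hp.symm)
  set x := towerRec fun α => (e α).Done
  have hx := towerRec_spec hι fun α _ hy => (e α).exists_done hy
  refine ⟨_, (· < ·), isWellOrder_lt, mk_ord_toType 𝔠, x, fun j => (hx j).1,
    fun j k h => (hx k).2.1 j h, ?_, ?_⟩
  · rintro ⟨z, hz, hzx⟩
    obtain ⟨α, hα⟩ := he (Sum.inl z)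
    have hdone := (hx α).2.2
    rw [hα] at hdone
    exact hdone hz (hzx α)
  · intro i A hA _ p hpA
    obtain ⟨α, hα⟩ := he (Sum.inr ⟨i, fun n => ⟨A n, hA n⟩, p⟩)
    have hdone := (hx α).2.2
    rw [hα] at hdone
    obtain ⟨q, hqp, hq⟩ := hdone hpA
    exact ⟨q, hqp, α, hq⟩
end

section
/- Every Baire-comeager subset of [ω]^ω contains a perfect almost disjoint family: if C ⊆ [ω]^ω is comeager in some nonempty open set, then there is a perfect set P ⊆ C such that any two distinct elements of P have finite intersection. -/
/-! Build a scheme of cylinders indexed by binary strings, enumerated in heap order: each new node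
branches off its parent by one bit, pads with zeros past every node built before it, and then
shrinks into the next dense open set. Every branch then lies in the given dense `Gδ`, the branch
map is a continuous injection of `2^ω`, and two branches share only the ones of their common
initial nodes, because each node puts its new ones in a block of positions of its own. -/

open PiNat Function

namespace PiNat

theorem diag_mem_cylinder {E : ℕ → Type*} {x : ℕ → ∀ n, E n} {ℓ : ℕ → ℕ}
    (hℓ : StrictMono ℓ) (hx : ∀ n, x (n + 1) ∈ cylinder (x n) (ℓ n)) (n : ℕ) :
    (fun p => x (p + 1) p) ∈ cylinder (x n) (ℓ n) := by
  have nested : ∀ {n m}, n ≤ m → x m ∈ cylinder (x n) (ℓ n) := by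
    intro n m hm
    induction m, hm using Nat.le_induction with
    | base => exact self_mem_cylinder _ _
    | succ m hnm ih =>
      rw [← mem_cylinder_iff_eq.1 ih]
      exact cylinder_anti _ (hℓ.monotone hnm) (hx m)
  intro p hp
  rcases le_or_gt n (p + 1) with h | h
  · exact nested h p hp
  · exact (nested h.le p ((hℓ.id_le (p + 1)).trans_lt' p.lt_succ_self)).symm

variable {E : ℕ → Type*} [∀ n, TopologicalSpace (E n)] [∀ n, DiscreteTopology (E n)]

theorem exists_cylinder_subset {s : Set (∀ n, E n)} {x : ∀ n, E n} (hs : s ∈ nhds x) :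
    ∃ n, cylinder x n ⊆ s := by
  obtain ⟨_, ⟨y, n, rfl⟩, hx, hs⟩ := (isTopologicalBasis_cylinders E).mem_nhds_iff.1 hs
  exact ⟨n, mem_cylinder_iff_eq.1 hx ▸ hs⟩

theorem exists_cylinder_subset_of_dense {W : Set (∀ n, E n)} (hW : IsOpen W) (hd : Dense W)
    (x : ∀ n, E n) (n : ℕ) : ∃ z ∈ cylinder x n, ∃ N, n ≤ N ∧ cylinder z N ⊆ W := by
  obtain ⟨z, hzW, hzx⟩ :=
    hd.exists_mem_open (isOpen_cylinder E x n) ⟨x, self_mem_cylinder x n⟩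
  obtain ⟨N, hN⟩ := exists_cylinder_subset (hW.mem_nhds hzW)
  exact ⟨z, hzx, max n N, le_max_left _ _, (cylinder_anti z (le_max_right _ _)).trans hN⟩

instance perfectSpace [∀ n, Nontrivial (E n)] : PerfectSpace (∀ n, E n) where
  univ_preperfect := preperfect_iff_nhds.2 fun x _ s hs => by
    obtain ⟨n, hn⟩ := exists_cylinder_subset hs
    obtain ⟨e, he⟩ := exists_ne (x n)
    exact ⟨update x n e, ⟨hn (update_mem_cylinder x n e), trivial⟩,
      fun h => he (by simpa using congrFun h n)⟩

end PiNat

theorem perfect_range_of_continuous_injective {X Y : Type*} [TopologicalSpace X]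
    [CompactSpace X] [PerfectSpace X] [TopologicalSpace Y] [T2Space Y] {f : X → Y}
    (hf : Continuous f) (hinj : Injective f) : Perfect (Set.range f) := by
  refine ⟨(isCompact_range hf).isClosed, preperfect_iff_nhds.2 ?_⟩
  rintro _ ⟨a, rfl⟩ s hs
  obtain ⟨a', hs', ha'⟩ := ((eventually_nhdsWithin_of_eventually_nhds
    (hf.continuousAt.preimage_mem_nhds hs)).and self_mem_nhdsWithin).exists
      (f := nhdsWithin a {a}ᶜ)
  exact ⟨f a', ⟨hs', a', rfl⟩, hinj.ne ha'⟩

theorem exists_bit_extension {W : Set Cantor} (hW : IsOpen W) (hd : Dense W) (x : Cantor)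
    (ℓ : ℕ) (b : Bool) (L : ℕ) :
    ∃ y : Cantor × ℕ, L < y.2 ∧ cylinder y.1 y.2 ⊆ W ∧ y.1 ∈ cylinder x ℓ ∧ y.1 ℓ = b ∧
      ∀ i, ℓ < i → i ≤ L → y.1 i = false := by
  let x' : Cantor := fun i => if i < ℓ then x i else if i = ℓ then b else false
  obtain ⟨z, hz, N, hN, hzW⟩ := exists_cylinder_subset_of_dense hW hd x' (max ℓ L + 1)
  have hzx' : ∀ i ≤ max ℓ L, z i = x' i := fun i hi => mem_cylinder_iff.1 hz i (by omega)
  refine ⟨(z, N), by omega, hzW, fun i hi => ?_, ?_, fun i hℓi hiL => ?_⟩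
  · simp [hzx' i (by omega), x', hi]
  · simp [hzx' ℓ (by omega), x']
  · simp [hzx' i (by omega), x', hℓi.ne', hℓi.not_gt]

theorem Nat.le_bit (b : Bool) (j : ℕ) : j ≤ Nat.bit b j := by
  rw [Nat.bit_val]; omega

/-- Nodes are indexed in heap order: node `k + 1` is the child of node `k / 2` in direction
`k.bodd`. The ones that node `k + 1` adds to its parent lie beyond `len k`, hence beyond every
earlier node, so distinct nodes contribute to disjoint blocks `(len (k - 1), len k]`. -/
structure AlmostDisjointScheme where
  pt : ℕ → Cantor
  len : ℕ → ℕ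
  strictMono_len : StrictMono len
  pt_succ_mem : ∀ k, pt (k + 1) ∈ cylinder (pt (k / 2)) (len (k / 2))
  pt_succ_len : ∀ k, pt (k + 1) (len (k / 2)) = k.bodd
  pt_succ_eq_false : ∀ k i, len (k / 2) < i → i ≤ len k → pt (k + 1) i = false

def heapIndex (a : Cantor) : ℕ → ℕ
  | 0 => 0
  | n + 1 => Nat.bit (a n) (heapIndex a n) + 1

theorem strictMono_heapIndex (a : Cantor) : StrictMono (heapIndex a) :=
  strictMono_nat_of_lt_succ fun n => Nat.lt_succ_of_le (Nat.le_bit (a n) (heapIndex a n))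

theorem continuous_heapIndex (n : ℕ) : Continuous fun a : Cantor => heapIndex a n := by
  induction n with
  | zero => exact continuous_const
  | succ n ih =>
    exact (continuous_of_discreteTopology (f := fun q : Bool × ℕ => Nat.bit q.1 q.2 + 1)).comp
      ((continuous_apply n).prodMk ih)

theorem eq_and_agree_of_heapIndex_eq {a b : Cantor} {m m' : ℕ}
    (h : heapIndex a m = heapIndex b m') :
    m = m' ∧ ∀ i < m, a i = b i := by
  induction m generalizing m' with
  | zero =>
    cases m' with
    | zero => simp
    | succ m' => simp [heapIndex] at h
  | succ m ih =>
    cases m' with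
    | zero => simp [heapIndex] at h
    | succ m' =>
      have hbit : Nat.bit (a m) (heapIndex a m) = Nat.bit (b m') (heapIndex b m') := by
        simpa [heapIndex] using h
      obtain ⟨rfl, hlt⟩ := ih (m' := m')
        (by rw [← Nat.bit_div_two (a m) (heapIndex a m), hbit, Nat.bit_div_two])
      refine ⟨rfl, fun i hi => ?_⟩
      rcases Nat.lt_succ_iff_lt_or_eq.1 hi with hi | rfl
      · exact hlt i hi
      · rw [← Nat.bodd_bit (a i) (heapIndex a i), hbit, Nat.bodd_bit]

namespace AlmostDisjointScheme

variable (S : AlmostDisjointScheme)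

def branch (a : Cantor) : Cantor := fun p => S.pt (heapIndex a (p + 1)) p

theorem pt_heapIndex_succ_mem (a : Cantor) (n : ℕ) :
    S.pt (heapIndex a (n + 1)) ∈ cylinder (S.pt (heapIndex a n)) (S.len (heapIndex a n)) := by
  simpa [heapIndex, Nat.bit_div_two] using S.pt_succ_mem (Nat.bit (a n) (heapIndex a n))

theorem branch_mem_cylinder (a : Cantor) (n : ℕ) :
    S.branch a ∈ cylinder (S.pt (heapIndex a n)) (S.len (heapIndex a n)) :=
  diag_mem_cylinder (S.strictMono_len.comp (strictMono_heapIndex a))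
    (S.pt_heapIndex_succ_mem a) n

theorem branch_apply_len (a : Cantor) (n : ℕ) : S.branch a (S.len (heapIndex a n)) = a n := by
  rw [mem_cylinder_iff.1 (S.branch_mem_cylinder a (n + 1)) _
    (S.strictMono_len (strictMono_heapIndex a n.lt_succ_self))]
  simpa [heapIndex, Nat.bit_div_two, Nat.bodd_bit] using
    S.pt_succ_len (Nat.bit (a n) (heapIndex a n))

theorem injective_branch : Injective S.branch := by
  intro a b h
  have step : ∀ n, heapIndex a n = heapIndex b n → a n = b n := fun n hn => by
    rw [← S.branch_apply_len a n, ← S.branch_apply_len b n, h, hn]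
  have hindex : ∀ n, heapIndex a n = heapIndex b n := by
    intro n
    induction n with
    | zero => rfl
    | succ n ih => simp only [heapIndex, ih, step n ih]
  exact funext fun n => step n (hindex n)

theorem continuous_branch : Continuous S.branch :=
  continuous_pi fun p =>
    (continuous_of_discreteTopology (f := fun k => S.pt k p)).comp (continuous_heapIndex (p + 1))

theorem exists_heapIndex_of_branch_apply {a : Cantor} {p : ℕ} (hp : S.branch a p = true) :
    ∃ m, p ≤ S.len (heapIndex a m) ∧ ∀ k < heapIndex a m, S.len k < p := by
  have hex : ∃ m, p ≤ S.len (heapIndex a m) :=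
    ⟨p, (S.strictMono_len.comp (strictMono_heapIndex a)).id_le p⟩
  refine ⟨Nat.find hex, Nat.find_spec hex, ?_⟩
  rcases hfind : Nat.find hex with _ | m
  · simp [heapIndex]
  have hparent : S.len (heapIndex a m) < p := not_le.1 (Nat.find_min hex (by omega))
  intro k hk
  suffices S.len (Nat.bit (a m) (heapIndex a m)) < p from
    (S.strictMono_len.monotone (Nat.le_of_lt_succ hk)).trans_lt this
  by_contra! hle
  have hpt : S.branch a p = S.pt (heapIndex a (m + 1)) p := mem_cylinder_iff.1
    (S.branch_mem_cylinder a (m + 1)) p (hle.trans_lt (S.strictMono_len (Nat.lt_succ_self _)))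
  rw [hp, heapIndex, S.pt_succ_eq_false _ p (by rwa [Nat.bit_div_two]) hle] at hpt
  exact Bool.noConfusion hpt

theorem finite_inter_branch {a b : Cantor} (hab : a ≠ b) :
    (cset (S.branch a) ∩ cset (S.branch b)).Finite := by
  obtain ⟨n, hn⟩ := ne_iff.1 hab
  refine (Set.finite_Iic (S.len (heapIndex a n))).subset fun p ⟨hpa, hpb⟩ => ?_
  obtain ⟨m, hpm, hm⟩ := S.exists_heapIndex_of_branch_apply hpa
  obtain ⟨m', hpm', hm'⟩ := S.exists_heapIndex_of_branch_apply hpb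
  have hnode : heapIndex a m = heapIndex b m' := by
    by_contra hne
    rcases Ne.lt_or_gt hne with h | h
    · exact (hm' _ h).not_ge hpm
    · exact (hm _ h).not_ge hpm'
  obtain ⟨rfl, hagree⟩ := eq_and_agree_of_heapIndex_eq hnode
  have hmn : m ≤ n := not_lt.1 fun h => hn (hagree n h)
  exact hpm.trans (S.strictMono_len.monotone ((strictMono_heapIndex a).monotone hmn))

theorem branch_mem_of_antitone {W : ℕ → Set Cantor} (hW : Antitone W)
    (hS : ∀ k, cylinder (S.pt (k + 1)) (S.len (k + 1)) ⊆ W k) (a : Cantor) (n : ℕ) :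
    S.branch a ∈ W n :=
  hW (((strictMono_heapIndex a).id_le n).trans (Nat.le_bit (a n) (heapIndex a n)))
    (hS _ (S.branch_mem_cylinder a (n + 1)))

end AlmostDisjointScheme

def heapNodes (root : Cantor × ℕ) (ext : ℕ → Cantor × ℕ → Bool → ℕ → Cantor × ℕ) :
    ℕ → Cantor × ℕ
  | 0 => root
  | k + 1 => ext k (heapNodes root ext (k / 2)) k.bodd (heapNodes root ext k).2

theorem AlmostDisjointScheme.exists_of_dense {W : ℕ → Set Cantor} (hW : ∀ k, IsOpen (W k))
    (hd : ∀ k, Dense (W k)) {U : Set Cantor} (hU : IsOpen U) (hne : U.Nonempty) :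
    ∃ S : AlmostDisjointScheme, cylinder (S.pt 0) (S.len 0) ⊆ U ∧
      ∀ k, cylinder (S.pt (k + 1)) (S.len (k + 1)) ⊆ W k := by
  obtain ⟨x, hx⟩ := hne
  obtain ⟨ℓ, hℓ⟩ := exists_cylinder_subset (hU.mem_nhds hx)
  choose ext hlt hext hmem hbit hzero using
    fun k (y : Cantor × ℕ) b L => exists_bit_extension (hW k) (hd k) y.1 y.2 b L
  let node := heapNodes (x, ℓ) ext
  have node_zero : node 0 = (x, ℓ) := by simp only [node]; rw [heapNodes]
  have node_succ : ∀ k, node (k + 1) = ext k (node (k / 2)) k.bodd (node k).2 := fun k => by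
    simp only [node]; rw [heapNodes]
  refine ⟨⟨fun k => (node k).1, fun k => (node k).2, strictMono_nat_of_lt_succ fun k => ?_,
    fun k => ?_, fun k => ?_, fun k i h₁ h₂ => ?_⟩, ?_, fun k => ?_⟩ <;>
    simp only [node_zero, node_succ]
  exacts [hlt _ _ _ _, hmem _ _ _ _, hbit _ _ _ _, hzero _ _ _ _ i h₁ h₂, hℓ, hext _ _ _ _]

theorem exists_perfect_almostDisjoint_subset {G : Set Cantor} (hG : IsGδ G) (hGd : Dense G)
    {U : Set Cantor} (hU : IsOpen U) (hne : U.Nonempty) :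
    ∃ P ⊆ U ∩ G, P.Nonempty ∧ Perfect P ∧ P.Pairwise fun x y => (cset x ∩ cset y).Finite := by
  obtain ⟨D, hDo, rfl⟩ := isGδ_iff_eq_iInter_nat.1 hG
  let W : ℕ → Set Cantor := fun k => ⋂ i ≤ k, D i
  have hW : Antitone W := fun _ _ h =>
    Set.biInter_subset_biInter_left (Set.Iic_subset_Iic.2 h)
  obtain ⟨S, hSU, hSW⟩ := AlmostDisjointScheme.exists_of_dense
    (fun k => (Set.finite_Iic k).isOpen_biInter fun i _ => hDo i)
    (fun k => hGd.mono fun x hx => Set.mem_iInter₂.2 fun i _ => Set.mem_iInter.1 hx i) hU hne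
  refine ⟨Set.range S.branch, ?_, Set.range_nonempty _,
    perfect_range_of_continuous_injective S.continuous_branch S.injective_branch, ?_⟩
  · rintro _ ⟨a, rfl⟩
    exact ⟨hSU (S.branch_mem_cylinder a 0), Set.mem_iInter.2 fun n =>
      Set.mem_iInter₂.1 (S.branch_mem_of_antitone hW hSW a n) n le_rfl⟩
  · rintro _ ⟨a, rfl⟩ _ ⟨b, rfl⟩ hab
    exact S.finite_inter_branch (ne_of_apply_ne _ hab)

theorem comeager_contains_perfect_ad_general
    (C : Set Cantor)
    (U : Set Cantor) (hU : IsOpen U) (hne : U.Nonempty)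
    (hcom : IsMeagre (U \ C)) :
    ∃ P : Set Cantor, P ⊆ C ∧ P.Nonempty ∧ Perfect P ∧
      ∀ x ∈ P, ∀ y ∈ P, x ≠ y → (cset x ∩ cset y).Finite := by
  obtain ⟨G, hGC, hG, hGd⟩ := mem_residual.1 hcom
  obtain ⟨P, hPG, hPne, hP, hPad⟩ := exists_perfect_almostDisjoint_subset hG hGd hU hne
  refine ⟨P, fun x hx => ?_, hPne, hP, hPad⟩
  by_contra hxC
  exact hGC (hPG hx).2 ⟨(hPG hx).1, hxC⟩

/-- Every subset of `[ω]^ω` comeager in some nonempty open set contains a perfect almost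
disjoint family. -/
theorem comeager_contains_perfect_ad
    (C : Set Cantor) (hC : ∀ x ∈ C, (cset x).Infinite)
    (U : Set Cantor) (hU : IsOpen U) (hne : U.Nonempty)
    (hcom : IsMeagre (U \ C)) :
    ∃ P : Set Cantor, P ⊆ C ∧ P.Nonempty ∧ Perfect P ∧
      ∀ x ∈ P, ∀ y ∈ P, x ≠ y → (cset x ∩ cset y).Finite :=
  comeager_contains_perfect_ad_general C U hU hne hcom
end

section
/- If X ⊆ [ω]^ω is an independent family, then the set H = { x ∈ [ω]^ω : there exist disjoint finite F, G ⊆ X with σ(F,G) \ x finite } is meager in [ω]^ω (and symmetrically K = { x : there exist disjoint finite F, G ⊆ X with σ(F,G) ∩ x finite } is meager), provided H (respectively K) has the Baire property. -/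
/-- `σ(F,G) = ⋂_{a∈F} a ∩ ⋂_{b∈G} (ω \ b)`. -/
def sigmaFG (F G : Finset (Set ℕ)) : Set ℕ :=
  (⋂ a ∈ (F : Set (Set ℕ)), a) ∩ ⋂ b ∈ (G : Set (Set ℕ)), bᶜ

/-- `X` is an independent family. -/
def IsIndependentFamily (X : Set (Set ℕ)) : Prop :=
  ∀ F G : Finset (Set ℕ), ↑F ⊆ X → ↑G ⊆ X → Disjoint F G → (sigmaFG F G).Infinite

/-- `S` has the Baire property. -/
def HasBP (S : Set Cantor) : Prop :=
  ∃ U : Set Cantor, IsOpen U ∧ IsMeagre ((S \ U) ∪ (U \ S))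

/-! Suppose `H` is not meagre. Having the Baire property, it is comeagre in a nonempty open set,
and a fusion argument along the complete binary tree yields pairwise almost disjoint
`x_z ∈ H`, `z ∈ 2^ℕ`: every node of the tree grows on its own finite interval, so two branches
only share the points placed by their common nodes, and node `k` is chosen inside the `k`-th
of a decreasing sequence of dense open sets whose intersection lies in `H` near that open set. For witnesses `(F_z, G_z)` of `x_z ∈ H`, a Δ-system argument
on these uncountably many pairs of finite sets gives `z ≠ w` with `F_z ∪ F_w` disjoint from
`G_z ∪ G_w`, and then `σ(F_z ∪ F_w, G_z ∪ G_w)` is finite, being contained in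
`(σ(F_z, G_z) \ x_z) ∪ (σ(F_w, G_w) \ x_w) ∪ (x_z ∩ x_w)`. Finally `K` is the preimage of `H`
under the complementation homeomorphism of `2^ℕ`. -/

open Set PiNat

section DeltaSystem

open Finset

variable {ι α : Type*} [DecidableEq α] {I : Set ι} {F G : ι → Finset α}

theorem Finset.disjoint_of_disjoint_erase {s t : Finset α} {a : α} (ha : a ∉ s ∨ a ∉ t)
    (h : Disjoint (s.erase a) (t.erase a)) : Disjoint s t := by
  rcases ha with ha | ha
  · rwa [erase_eq_of_notMem ha, ← disjoint_erase_comm, erase_eq_of_notMem ha] at h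
  · rwa [erase_eq_of_notMem ha (s := t), disjoint_erase_comm, erase_eq_of_notMem ha] at h

theorem exists_ne_disjoint_cross_of_forall_countable (hI : ¬ I.Countable)
    (hsparse : ∀ a, {i ∈ I | a ∈ F i ∪ G i}.Countable) :
    ∃ i ∈ I, ∃ j ∈ I, i ≠ j ∧ Disjoint (F i) (G j) ∧ Disjoint (F j) (G i) := by
  obtain ⟨i, hi⟩ : I.Nonempty := Set.nonempty_iff_ne_empty.2 fun h => hI (h ▸ Set.countable_empty)
  set B := ⋃ a ∈ (↑(F i ∪ G i) : Set α), {j ∈ I | a ∈ F j ∪ G j}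
  have hB : (insert i B).Countable :=
    ((Finset.countable_toSet _).biUnion fun a _ => hsparse a).insert i
  obtain ⟨j, hj, hjB⟩ := Set.not_subset.1 fun h => hI (hB.mono h)
  have hmeet : ∀ a, a ∈ F i ∪ G i → a ∈ F j ∪ G j → False := fun a ha ha' =>
    hjB (Set.mem_insert_of_mem _ (Set.mem_biUnion (by simpa using ha) ⟨hj, ha'⟩))
  refine ⟨i, hi, j, hj, fun h => hjB (h ▸ Set.mem_insert _ _), ?_, ?_⟩
  · exact Finset.disjoint_left.2 fun a ha ha' => hmeet a (mem_union_left _ ha) (mem_union_right _ ha')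
  · exact Finset.disjoint_left.2 fun a ha ha' => hmeet a (mem_union_right _ ha') (mem_union_left _ ha)

theorem exists_ne_disjoint_cross_of_card_le (n : ℕ) (hI : ¬ I.Countable)
    (hFG : ∀ i ∈ I, Disjoint (F i) (G i)) (hcard : ∀ i ∈ I, #(F i ∪ G i) ≤ n) :
    ∃ i ∈ I, ∃ j ∈ I, i ≠ j ∧ Disjoint (F i) (G j) ∧ Disjoint (F j) (G i) := by
  induction n generalizing I F G with
  | zero =>
    refine exists_ne_disjoint_cross_of_forall_countable hI fun a => ?_
    convert Set.countable_empty
    simp_all [Set.eq_empty_iff_forall_notMem]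
  | succ n ih =>
    by_cases hsparse : ∀ a, {i ∈ I | a ∈ F i ∪ G i}.Countable
    · exact exists_ne_disjoint_cross_of_forall_countable hI hsparse
    push Not at hsparse
    obtain ⟨a, ha⟩ := hsparse
    -- `a` lies on the same side in uncountably many of the pairs; remove it there
    obtain ⟨J, hJI, hJ, haJ, hside⟩ : ∃ J ⊆ I, ¬ J.Countable ∧ (∀ i ∈ J, a ∈ F i ∪ G i) ∧
        ∀ i ∈ J, ∀ j ∈ J, a ∉ F i ∨ a ∉ G j := by
      have hsplit : {i ∈ I | a ∈ F i ∪ G i} = {i ∈ I | a ∈ F i} ∪ {i ∈ I | a ∈ G i} := by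
        ext i; simp [and_or_left]
      rw [hsplit, countable_union, not_and_or] at ha
      rcases ha with ha | ha
      · exact ⟨_, sep_subset _ _, ha, fun i hi => mem_union_left _ hi.2,
          fun i _ j hj => .inr (disjoint_left.1 (hFG j hj.1) hj.2)⟩
      · exact ⟨_, sep_subset _ _, ha, fun i hi => mem_union_right _ hi.2,
          fun i hi j _ => .inl fun h => disjoint_left.1 (hFG i hi.1) h hi.2⟩
    obtain ⟨i, hi, j, hj, hij, h₁, h₂⟩ := ih hJ (F := fun i => (F i).erase a)
      (G := fun i => (G i).erase a)
      (fun i hi => (hFG i (hJI hi)).mono (erase_subset _ _) (erase_subset _ _))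
      (fun i hi => by
        rw [← erase_union_distrib, card_erase_of_mem (haJ i hi)]
        have := hcard i (hJI hi)
        omega)
    exact ⟨i, hJI hi, j, hJI hj, hij, disjoint_of_disjoint_erase (hside i hi j hj) h₁,
      disjoint_of_disjoint_erase (hside j hj i hi) h₂⟩

theorem exists_ne_disjoint_cross_of_not_countable (hI : ¬ I.Countable)
    (hFG : ∀ i ∈ I, Disjoint (F i) (G i)) :
    ∃ i ∈ I, ∃ j ∈ I, i ≠ j ∧ Disjoint (F i) (G j) ∧ Disjoint (F j) (G i) := by
  obtain ⟨n, hn⟩ : ∃ n, ¬ {i ∈ I | #(F i ∪ G i) ≤ n}.Countable := by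
    by_contra! h
    refine hI ((Set.countable_iUnion h).mono fun i hi => ?_)
    exact Set.mem_iUnion.2 ⟨_, hi, le_rfl⟩
  obtain ⟨i, hi, j, hj, hij, h⟩ := exists_ne_disjoint_cross_of_card_le n hn
    (fun i hi => hFG i hi.1) (fun i hi => hi.2)
  exact ⟨i, hi.1, j, hj.1, hij, h⟩

end DeltaSystem

/-- The nodes visited by a branch `z` of the complete binary tree on `ℕ` in heap order,
where the children of `k` are `2k + 1` and `2k + 2`. -/
def heapPath (z : ℕ → Bool) : ℕ → ℕ
  | 0 => 0
  | n + 1 => 2 * heapPath z n + (z n).toNat + 1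

theorem heapPath_succ_div_two (z : ℕ → Bool) (n : ℕ) :
    (2 * heapPath z n + (z n).toNat) / 2 = heapPath z n := by
  have := Bool.toNat_le (z n)
  omega

theorem strictMono_heapPath (z : ℕ → Bool) : StrictMono (heapPath z) :=
  strictMono_nat_of_lt_succ fun n => by simp only [heapPath]; omega

theorem heapPath_mem_Ico (z : ℕ → Bool) (n : ℕ) :
    heapPath z n + 1 ∈ Ico (2 ^ n) (2 ^ (n + 1)) := by
  induction n with
  | zero => simp [heapPath]
  | succ n ih =>
    have := Bool.toNat_le (z n)
    simp only [mem_Ico, heapPath, pow_succ] at ih ⊢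
    omega

theorem heapPath_eq_heapPath {z w : ℕ → Bool} {m n : ℕ} (h : heapPath z m = heapPath w n) :
    m = n ∧ ∀ j < m, z j = w j := by
  obtain rfl : m = n := by
    have hz := heapPath_mem_Ico z m
    have hw := heapPath_mem_Ico w n
    rw [h] at hz
    rw [← Nat.log_eq_of_pow_le_of_lt_pow hz.1 hz.2, Nat.log_eq_of_pow_le_of_lt_pow hw.1 hw.2]
  refine ⟨rfl, ?_⟩
  induction m with
  | zero => simp
  | succ m ih =>
    have hbit := congrArg (· % 2) h
    have hparent := congrArg (· / 2) h
    have hz := Bool.toNat_le (z m)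
    have hw := Bool.toNat_le (w m)
    simp only [heapPath] at hbit hparent
    have hzw : z m = w m := by
      have hbit' : (z m).toNat = (w m).toNat := by omega
      revert hbit'
      cases z m <;> cases w m <;> simp
    intro j hj
    rcases Nat.lt_succ_iff_lt_or_eq.1 hj with hj | rfl
    · exact ih (by omega) j hj
    · exact hzw

theorem PiNat.exists_cylinder_subset_s10 {E : ℕ → Type*} [∀ n, TopologicalSpace (E n)]
    [∀ n, DiscreteTopology (E n)] {U : Set (∀ n, E n)} (hU : IsOpen U) {x : ∀ n, E n}
    (hx : x ∈ U) : ∃ n, cylinder x n ⊆ U := by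
  obtain ⟨_, ⟨y, n, rfl⟩, hxy, hsub⟩ := (isTopologicalBasis_cylinders E).exists_subset_of_mem_open hx hU
  exact ⟨n, mem_cylinder_iff_eq.1 hxy ▸ hsub⟩

def IsExtension (U : Set Cantor) (e : ℕ) (f : Cantor) (p : ℕ × Cantor) : Prop :=
  e < p.1 ∧ p.2 ∈ cylinder f e ∧ (∀ i, p.1 ≤ i → p.2 i = false) ∧ cylinder p.2 p.1 ⊆ U

theorem exists_isExtension {U : Set Cantor} (hU : IsOpen U) (hd : Dense U) (e : ℕ) (f : Cantor) :
    ∃ p, IsExtension U e f p := by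
  obtain ⟨y, hyf, hyU⟩ := hd.inter_open_nonempty _ (isOpen_cylinder _ f e) ⟨f, self_mem_cylinder f e⟩
  obtain ⟨N, hN⟩ := PiNat.exists_cylinder_subset_s10 hU hyU
  set M := max (e + 1) N
  refine ⟨(M, fun i => if i < M then y i else false), by omega, fun i hi => ?_,
    fun i hi => if_neg (not_lt.2 hi), fun u hu => hN fun i hi => ?_⟩
  · simpa [show i < M by omega] using hyf i hi
  · simpa [show i < M by omega] using hu i (by omega)

theorem IsExtension.eq_true {U : Set Cantor} {e : ℕ} {f : Cantor} {p : ℕ × Cantor}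
    (hp : IsExtension U e f p) {i : ℕ} (h : p.2 i = true) : (i < e ∧ f i = true) ∨ i ∈ Ico e p.1 := by
  by_cases hie : i < e
  · exact .inl ⟨hie, hp.2.1 i hie ▸ h⟩
  · refine .inr ⟨not_lt.1 hie, not_le.1 fun hi => ?_⟩
    simp [hp.2.2.1 i hi] at h

section Scheme

variable (ext : ℕ → ℕ → Cantor → ℕ × Cantor) (N₀ : ℕ) (s : Cantor)

/-- Node `k` of the tree (in the heap order of `heapPath`) is built by `ext k` from its parent,
or from `s` at the root, beyond the point where node `k - 1` ends; the first component records
where node `k` ends. -/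
def schemeSeq : ℕ → ℕ × Cantor
  | 0 => ext 0 N₀ s
  | k + 1 => ext (k + 1) (schemeSeq k).1 (schemeSeq (k / 2)).2

def schemeStart : ℕ → ℕ
  | 0 => N₀
  | k + 1 => (schemeSeq ext N₀ s k).1

def schemeParent : ℕ → Cantor
  | 0 => s
  | k + 1 => (schemeSeq ext N₀ s (k / 2)).2

def schemeNode (k : ℕ) : Cantor := (schemeSeq ext N₀ s k).2

theorem schemeSeq_eq (k : ℕ) :
    schemeSeq ext N₀ s k = ext k (schemeStart ext N₀ s k) (schemeParent ext N₀ s k) := by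
  cases k <;> rw [schemeSeq] <;> rfl

theorem schemeParent_heapPath_succ (z : Cantor) (n : ℕ) :
    schemeParent ext N₀ s (heapPath z (n + 1)) = schemeNode ext N₀ s (heapPath z n) := by
  rw [heapPath, schemeParent, heapPath_succ_div_two]
  rfl

def schemeBranch (z : Cantor) : Cantor := fun i => schemeNode ext N₀ s (heapPath z i) i

variable {D : ℕ → Set Cantor} {ext N₀ s}

theorem isExtension_schemeNode (hext : ∀ n e f, IsExtension (D n) e f (ext n e f)) (k : ℕ) :
    IsExtension (D k) (schemeStart ext N₀ s k) (schemeParent ext N₀ s k)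
      (schemeStart ext N₀ s (k + 1), schemeNode ext N₀ s k) := by
  rw [schemeNode, schemeStart, schemeSeq_eq]
  exact hext _ _ _

theorem strictMono_schemeStart (hext : ∀ n e f, IsExtension (D n) e f (ext n e f)) :
    StrictMono (schemeStart ext N₀ s) :=
  strictMono_nat_of_lt_succ fun k => (isExtension_schemeNode hext k).1

theorem schemeNode_heapPath_mem_cylinder (hext : ∀ n e f, IsExtension (D n) e f (ext n e f))
    (z : Cantor) {m n : ℕ} (hmn : m ≤ n) :
    schemeNode ext N₀ s (heapPath z n) ∈
      cylinder (schemeNode ext N₀ s (heapPath z m)) (schemeStart ext N₀ s (heapPath z m + 1)) := by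
  induction n, hmn using Nat.le_induction with
  | base => exact self_mem_cylinder _ _
  | succ n hmn ih =>
    have hstep := (isExtension_schemeNode hext (N₀ := N₀) (s := s) (heapPath z (n + 1))).2.1
    rw [schemeParent_heapPath_succ] at hstep
    have hle : schemeStart ext N₀ s (heapPath z m + 1) ≤ schemeStart ext N₀ s (heapPath z (n + 1)) :=
      (strictMono_schemeStart hext).monotone
        (Nat.succ_le_of_lt ((strictMono_heapPath z).lt_iff_lt.2 (Nat.lt_succ_of_le hmn)))
    rw [mem_cylinder_iff_eq] at ih ⊢
    rw [← ih]
    exact mem_cylinder_iff_eq.1 (cylinder_anti _ hle hstep)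

theorem lt_schemeStart_heapPath (hext : ∀ n e f, IsExtension (D n) e f (ext n e f))
    (z : Cantor) (i : ℕ) : i < schemeStart ext N₀ s (heapPath z i + 1) :=
  calc i ≤ heapPath z i := (strictMono_heapPath z).id_le i
    _ < heapPath z i + 1 := Nat.lt_succ_self _
    _ ≤ schemeStart ext N₀ s (heapPath z i + 1) := (strictMono_schemeStart hext).id_le _

theorem schemeBranch_mem_cylinder (hext : ∀ n e f, IsExtension (D n) e f (ext n e f))
    (z : Cantor) (n : ℕ) :
    schemeBranch ext N₀ s z ∈
      cylinder (schemeNode ext N₀ s (heapPath z n)) (schemeStart ext N₀ s (heapPath z n + 1)) := by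
  intro i hi
  have hn := schemeNode_heapPath_mem_cylinder hext (N₀ := N₀) (s := s) z (le_max_left n i)
  have hi' := schemeNode_heapPath_mem_cylinder hext (N₀ := N₀) (s := s) z (le_max_right n i)
  exact (hi' i (lt_schemeStart_heapPath hext z i)).symm.trans (hn i hi)

theorem schemeBranch_mem (hext : ∀ n e f, IsExtension (D n) e f (ext n e f)) (hD : Antitone D)
    (z : Cantor) (n : ℕ) : schemeBranch ext N₀ s z ∈ D n :=
  hD ((strictMono_heapPath z).id_le n)
    ((isExtension_schemeNode hext _).2.2.2 (schemeBranch_mem_cylinder hext z n))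

theorem schemeBranch_mem_cylinder_base (hext : ∀ n e f, IsExtension (D n) e f (ext n e f))
    (z : Cantor) : schemeBranch ext N₀ s z ∈ cylinder s N₀ := by
  have h0 := (isExtension_schemeNode hext (N₀ := N₀) (s := s) (heapPath z 0)).2.1
  have h1 := cylinder_anti _ (isExtension_schemeNode hext (N₀ := N₀) (s := s) (heapPath z 0)).1.le
    (schemeBranch_mem_cylinder hext z 0)
  rw [mem_cylinder_iff_eq] at h0 h1 ⊢
  exact h1.trans h0

theorem schemeNode_heapPath_eq_true (hext : ∀ n e f, IsExtension (D n) e f (ext n e f))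
    (z : Cantor) {n i : ℕ} (h : schemeNode ext N₀ s (heapPath z n) i = true) :
    i < N₀ ∨ ∃ m ≤ n, i ∈ Ico (schemeStart ext N₀ s (heapPath z m))
      (schemeStart ext N₀ s (heapPath z m + 1)) := by
  induction n with
  | zero =>
    rcases (isExtension_schemeNode hext (heapPath z 0)).eq_true h with ⟨hi, -⟩ | hi
    · exact .inl hi
    · exact .inr ⟨0, le_rfl, hi⟩
  | succ n ih =>
    rcases (isExtension_schemeNode hext (heapPath z (n + 1))).eq_true h with ⟨-, hi⟩ | hi
    · rw [schemeParent_heapPath_succ] at hi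
      obtain hi | ⟨m, hm, hi⟩ := ih hi
      · exact .inl hi
      · exact .inr ⟨m, hm.trans n.le_succ, hi⟩
    · exact .inr ⟨n + 1, le_rfl, hi⟩

theorem schemeBranch_inter_finite (hext : ∀ n e f, IsExtension (D n) e f (ext n e f))
    {z w : Cantor} (hzw : z ≠ w) :
    (cset (schemeBranch ext N₀ s z) ∩ cset (schemeBranch ext N₀ s w)).Finite := by
  obtain ⟨d, hd⟩ := Function.ne_iff.1 hzw
  have hmono := (strictMono_schemeStart hext (N₀ := N₀) (s := s)).monotone
  have hN₀ : N₀ ≤ schemeStart ext N₀ s (heapPath z d + 1) := hmono (Nat.zero_le _)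
  refine (finite_Iio (schemeStart ext N₀ s (heapPath z d + 1))).subset ?_
  rintro i ⟨hz, hw⟩
  obtain hi | ⟨m, -, hm⟩ := schemeNode_heapPath_eq_true hext z hz
  · exact lt_of_lt_of_le hi hN₀
  obtain hi | ⟨m', -, hm'⟩ := schemeNode_heapPath_eq_true hext w hw
  · exact lt_of_lt_of_le hi hN₀
  -- the intervals of distinct nodes are disjoint, so `i` lies on a common node of both branches
  have hnode : heapPath z m = heapPath w m' := by
    by_contra hne
    exact Set.disjoint_left.1 (hmono.pairwise_disjoint_on_Ico_succ hne) hm hm'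
  obtain ⟨rfl, hagree⟩ := heapPath_eq_heapPath hnode
  have hmd : m ≤ d := not_lt.1 fun hdm => hd (hagree d hdm)
  exact lt_of_lt_of_le hm.2 (hmono (Nat.succ_le_succ ((strictMono_heapPath z).monotone hmd)))

end Scheme

theorem exists_pairwise_almostDisjoint_of_isMeagre_diff {U C : Set Cantor} (hU : IsOpen U)
    (hne : U.Nonempty) (hC : IsMeagre (U \ C)) :
    ∃ f : Cantor → Cantor, (∀ z, f z ∈ C) ∧
      Pairwise fun z w => (cset (f z) ∩ cset (f w)).Finite := by
  obtain ⟨s, hs⟩ := hne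
  obtain ⟨N₀, hN₀⟩ := PiNat.exists_cylinder_subset_s10 hU hs
  obtain ⟨_, ht, htGδ, htd⟩ := mem_residual.1 hC
  obtain ⟨g, hg, rfl⟩ := isGδ_iff_eq_iInter_nat.1 htGδ
  set D : ℕ → Set Cantor := fun n => ⋂ i ∈ Iic n, g i
  have hDanti : Antitone D := fun m n h => biInter_subset_biInter_left (Iic_subset_Iic.2 h)
  have hD : ∀ n, IsOpen (D n) ∧ Dense (D n) := fun n =>
    ⟨(finite_Iic n).isOpen_biInter fun i _ => hg i,
      htd.mono fun x hx => mem_iInter₂.2 fun i _ => mem_iInter.1 hx i⟩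
  choose ext hext using fun n => exists_isExtension (hD n).1 (hD n).2
  refine ⟨schemeBranch ext N₀ s, fun z => ?_, fun z w hzw => schemeBranch_inter_finite hext hzw⟩
  have hg : schemeBranch ext N₀ s z ∈ ⋂ n, g n :=
    mem_iInter.2 fun n => mem_iInter₂.1 (schemeBranch_mem hext hDanti z n) n (mem_Iic.2 le_rfl)
  by_contra hzC
  exact ht hg ⟨hN₀ (schemeBranch_mem_cylinder_base hext z), hzC⟩

theorem HasBP.exists_isMeagre_diff {S : Set Cantor} (hS : HasBP S) (hmeagre : ¬ IsMeagre S) :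
    ∃ U, IsOpen U ∧ U.Nonempty ∧ IsMeagre (U \ S) := by
  obtain ⟨U, hU, hsymm⟩ := hS
  refine ⟨U, hU, nonempty_iff_ne_empty.2 fun hU₀ => hmeagre ?_, hsymm.mono subset_union_right⟩
  exact hsymm.mono fun x hx => .inl ⟨hx, by simp [hU₀]⟩

theorem sigmaFG_union [DecidableEq (Set ℕ)] (F₁ G₁ F₂ G₂ : Finset (Set ℕ)) :
    sigmaFG (F₁ ∪ F₂) (G₁ ∪ G₂) = sigmaFG F₁ G₁ ∩ sigmaFG F₂ G₂ := by
  simp only [sigmaFG, Finset.coe_union, biInter_union]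
  exact inter_inter_inter_comm _ _ _ _

theorem cset_not (x : Cantor) : cset (fun n => !x n) = (cset x)ᶜ := by
  ext n
  simp [cset]

theorem isMeagre_setOf_sigmaFG_diff_finite {X : Set (Set ℕ)} (hX : IsIndependentFamily X)
    (hBP : HasBP {x : Cantor | ∃ F G : Finset (Set ℕ), ↑F ⊆ X ∧ ↑G ⊆ X ∧ Disjoint F G ∧
      (sigmaFG F G \ cset x).Finite}) :
    IsMeagre {x : Cantor | ∃ F G : Finset (Set ℕ), ↑F ⊆ X ∧ ↑G ⊆ X ∧ Disjoint F G ∧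
      (sigmaFG F G \ cset x).Finite} := by
  classical
  have : Uncountable Cantor := Cardinal.aleph0_lt_mk_iff.1 (by simp [Cardinal.aleph0_lt_continuum])
  by_contra hmeagre
  obtain ⟨U, hU, hne, hUH⟩ := hBP.exists_isMeagre_diff hmeagre
  obtain ⟨x, hxH, had⟩ := exists_pairwise_almostDisjoint_of_isMeagre_diff hU hne hUH
  choose F G hF hG hFG hfin using hxH
  obtain ⟨z, -, w, -, hzw, hzw₁, hzw₂⟩ :=
    exists_ne_disjoint_cross_of_not_countable not_countable_univ fun z (_ : z ∈ univ) => hFG z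
  refine hX (F z ∪ F w) (G z ∪ G w) (by simp [hF z, hF w]) (by simp [hG z, hG w])
    (by simp [Finset.disjoint_union_left, Finset.disjoint_union_right, *]) ?_
  rw [sigmaFG_union]
  refine (((hfin z).union (hfin w)).union (had hzw)).subset fun i ⟨hiz, hiw⟩ => ?_
  by_cases hz : i ∈ cset (x z) <;> by_cases hw : i ∈ cset (x w) <;> simp_all

theorem H_and_K_meager_general (X : Set (Set ℕ)) (hX : IsIndependentFamily X)
    (hH : HasBP {x : Cantor | ∃ F G : Finset (Set ℕ), ↑F ⊆ X ∧ ↑G ⊆ X ∧ Disjoint F G ∧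
      (sigmaFG F G \ cset x).Finite}) :
    IsMeagre {x : Cantor | ∃ F G : Finset (Set ℕ), ↑F ⊆ X ∧ ↑G ⊆ X ∧ Disjoint F G ∧
      (sigmaFG F G \ cset x).Finite} ∧
    IsMeagre {x : Cantor | ∃ F G : Finset (Set ℕ), ↑F ⊆ X ∧ ↑G ⊆ X ∧ Disjoint F G ∧
      (sigmaFG F G ∩ cset x).Finite} := by
  have hHm := isMeagre_setOf_sigmaFG_diff_finite hX hH
  refine ⟨hHm, ?_⟩
  let complement : Cantor ≃ₜ Cantor := .piCongrRight fun _ => .ofDiscrete Equiv.boolNot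
  convert hHm.preimage_of_isOpenMap complement.continuous complement.isOpenMap using 1
  have hcomplement : ∀ x, cset (complement x) = (cset x)ᶜ := cset_not
  ext x
  simp [hcomplement, sdiff_compl]

/-- If `X` is an independent family, then
`H = { x : ∃ disjoint finite F,G ⊆ X, σ(F,G) \ x finite }` and
`K = { x : ∃ disjoint finite F,G ⊆ X, σ(F,G) ∩ x finite }` are meager, provided they have
the Baire property. -/
theorem H_and_K_meager (X : Set (Set ℕ)) (hX : IsIndependentFamily X)
    (hH : HasBP {x : Cantor | ∃ F G : Finset (Set ℕ), ↑F ⊆ X ∧ ↑G ⊆ X ∧ Disjoint F G ∧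
      (sigmaFG F G \ cset x).Finite})
    (hK : HasBP {x : Cantor | ∃ F G : Finset (Set ℕ), ↑F ⊆ X ∧ ↑G ⊆ X ∧ Disjoint F G ∧
      (sigmaFG F G ∩ cset x).Finite}) :
    IsMeagre {x : Cantor | ∃ F G : Finset (Set ℕ), ↑F ⊆ X ∧ ↑G ⊆ X ∧ Disjoint F G ∧
      (sigmaFG F G \ cset x).Finite} ∧
    IsMeagre {x : Cantor | ∃ F G : Finset (Set ℕ), ↑F ⊆ X ∧ ↑G ⊆ X ∧ Disjoint F G ∧
      (sigmaFG F G ∩ cset x).Finite} :=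
  H_and_K_meager_general X hX hH
end

section
/- Section coding preserves linear ordering: define Y ⊆ [ω × ω]^ω by: y ∈ Y iff for every n ≥ 1, the n-th vertical section y_n equals y_0 \ y_0(n) or y_0 \ y_0(n+1) (as sets, where y_0(k) denotes the k-th element of y_0), where y_0 is infinite. If x, y ∈ Y with x_0 ⊊* y_0, then x ⊆* y (as subsets of ω × ω). Consequently, if the set of first sections {y_0 : y ∈ Y} is linearly ordered by ⊆*, then Y is linearly ordered by ⊆*. -/
def AlmostSubP (a b : Set (ℕ × ℕ)) : Prop := (a \ b).Finite

/-- The `n`-th vertical section of `y ⊆ ω × ω`. -/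
def vsec (y : Set (ℕ × ℕ)) (n : ℕ) : Set ℕ := {m | (n, m) ∈ y}

/-- `z \ z(k) = { m ∈ z : m ≥ z(k) }`, where `z(k)` is the `k`-th element of `z`. -/
def tailFrom (z : Set ℕ) (k : ℕ) : Set ℕ := {m ∈ z | Nat.nth (· ∈ z) k ≤ m}

/-- `y` is a coded element: `y_0` is infinite and each section `y_n` (`n ≥ 1`) equals
`y_0 \ y_0(n)` or `y_0 \ y_0(n+1)`. -/
def Coded (y : Set (ℕ × ℕ)) : Prop :=
  (vsec y 0).Infinite ∧
  ∀ n ≥ 1, vsec y n = tailFrom (vsec y 0) n ∨ vsec y n = tailFrom (vsec y 0) (n + 1)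


/-!
Write `a = x₀` and `b = y₀`. Counting the elements below `a(n)` (there are `n + 1` in `a`, all
but finitely many of them in `b`, plus arbitrarily many of `b \ a` once `n` is large) shows that
eventually `b(n+1) ≤ a(n)`. Once moreover `a(n)` exceeds every element of `a \ b`, the tail
`a \ a(n)` lies inside `b \ b(n+1)`, hence `x_n ⊆ y_n`. The finitely many remaining sections
differ from those of `y` by finite sets because `a ⊆* b`.
-/

open Filter

namespace Nat

theorem count_add_count_sdiff_le {a b : Set ℕ} [DecidablePred (· ∈ a)] [DecidablePred (· ∈ b)]
    (hab : (a \ b).Finite) (t : ℕ) :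
    count (· ∈ a) t + count (· ∈ b \ a) t ≤ count (· ∈ b) t + hab.toFinset.card := by
  simp only [count_eq_card_filter_range]
  rw [← Finset.card_union_of_disjoint (Finset.disjoint_filter.2 fun _ _ ha hba => hba.2 ha)]
  refine (Finset.card_le_card fun m hm => ?_).trans (Finset.card_union_le _ _)
  simp only [Finset.mem_union, Finset.mem_filter, Set.Finite.mem_toFinset, Set.mem_sdiff] at hm ⊢
  by_cases hmb : m ∈ b <;> tauto

theorem eventually_nth_add_le_nth {a b : Set ℕ} (ha : a.Infinite) (hab : (a \ b).Finite)
    (hba : (b \ a).Infinite) (k : ℕ) :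
    ∀ᶠ n in atTop, nth (· ∈ b) (n + k) ≤ nth (· ∈ a) n := by
  classical
  filter_upwards [eventually_ge_atTop (nth (· ∈ b \ a) (hab.toFinset.card + k))] with n hn
  set t := nth (· ∈ a) n + 1
  have hcount_a : count (· ∈ a) t = n + 1 := count_nth_succ_of_infinite (p := (· ∈ a)) ha n
  have hcount_ba : hab.toFinset.card + k < count (· ∈ b \ a) t :=
    (lt_nth_iff_count_lt (p := (· ∈ b \ a)) hba).2
      (Nat.lt_succ_of_le (hn.trans (nth_strictMono ha).le_apply))
  have hcount_b : n + k < count (· ∈ b) t := by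
    have := count_add_count_sdiff_le hab t
    omega
  exact Nat.le_of_lt_succ
    ((lt_nth_iff_count_lt (p := (· ∈ b)) (hba.mono Set.sdiff_subset)).1 hcount_b)

theorem eventually_sdiff_subset_Iio_nth {a b : Set ℕ} (ha : a.Infinite) (hab : (a \ b).Finite) :
    ∀ᶠ n in atTop, a \ b ⊆ Set.Iio (nth (· ∈ a) n) := by
  obtain ⟨B, hB⟩ := hab.bddAbove
  filter_upwards [(nth_strictMono ha).tendsto_atTop.eventually_gt_atTop B] with n hn m hm
  exact (hB hm).trans_lt hn

end Nat

theorem tailFrom_antitone {z : Set ℕ} (hz : z.Infinite) : Antitone (tailFrom z) :=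
  fun _ _ h _ hm => ⟨hm.1, (Nat.nth_monotone hz h).trans hm.2⟩

theorem tailFrom_subset_tailFrom {a b : Set ℕ} {j k : ℕ}
    (hle : Nat.nth (· ∈ b) j ≤ Nat.nth (· ∈ a) k) (hab : a \ b ⊆ Set.Iio (Nat.nth (· ∈ a) k)) :
    tailFrom a k ⊆ tailFrom b j := fun m hm =>
  have hmb : m ∈ b := by_contra fun hmb => (hab ⟨hm.1, hmb⟩).not_ge hm.2
  ⟨hmb, hle.trans hm.2⟩

theorem sdiff_tailFrom_finite {a b : Set ℕ} (hab : (a \ b).Finite) (j : ℕ) :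
    (a \ tailFrom b j).Finite := by
  refine (hab.union (Set.finite_Iio (Nat.nth (· ∈ b) j))).subset fun m ⟨hma, hm⟩ => ?_
  by_cases hmb : m ∈ b
  · exact Or.inr (not_le.1 fun hle => hm ⟨hmb, hle⟩)
  · exact Or.inl ⟨hma, hmb⟩

theorem finite_of_bddAbove_fst_of_vsec_finite {s : Set (ℕ × ℕ)} (hfst : BddAbove (Prod.fst '' s))
    (hsec : ∀ n, (vsec s n).Finite) : s.Finite := by
  refine Set.Finite.of_finite_fibers Prod.fst (Set.finite_iff_bddAbove.2 hfst) fun n _ => ?_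
  refine ((hsec n).image (Prod.mk n)).subset fun p ⟨hp, hpn⟩ => ⟨p.2, ?_, ?_⟩
  · rw [Set.mem_preimage, Set.mem_singleton_iff] at hpn
    simpa [vsec, ← hpn] using hp
  · exact Prod.ext hpn.symm rfl

namespace Coded

variable {x y : Set (ℕ × ℕ)} {n : ℕ}

theorem vsec_subset_tailFrom (hy : Coded y) (hn : 1 ≤ n) : vsec y n ⊆ tailFrom (vsec y 0) n := by
  rcases hy.2 n hn with h | h <;> rw [h]
  exact tailFrom_antitone hy.1 n.le_succ

theorem tailFrom_succ_subset_vsec (hy : Coded y) (hn : 1 ≤ n) :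
    tailFrom (vsec y 0) (n + 1) ⊆ vsec y n := by
  rcases hy.2 n hn with h | h <;> rw [h]
  exact tailFrom_antitone hy.1 n.le_succ

theorem vsec_sdiff_vsec_finite (hx : Coded x) (hy : Coded y)
    (h : AlmostSub (vsec x 0) (vsec y 0)) (n : ℕ) : (vsec x n \ vsec y n).Finite := by
  rcases n.eq_zero_or_pos with rfl | hn
  · exact h
  · exact (sdiff_tailFrom_finite h (n + 1)).subset
      (Set.sdiff_subset_sdiff ((hx.vsec_subset_tailFrom hn).trans (fun _ hm => hm.1))
        (hy.tailFrom_succ_subset_vsec hn))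

theorem eventually_vsec_subset (hx : Coded x) (hy : Coded y)
    (h : AlmostSub (vsec x 0) (vsec y 0)) (hinf : (vsec y 0 \ vsec x 0).Infinite) :
    ∀ᶠ n in atTop, vsec x n ⊆ vsec y n := by
  filter_upwards [Nat.eventually_nth_add_le_nth hx.1 h hinf 1,
    Nat.eventually_sdiff_subset_Iio_nth hx.1 h, eventually_ge_atTop 1] with n hle hsub hn
  exact (hx.vsec_subset_tailFrom hn).trans
    ((tailFrom_subset_tailFrom hle hsub).trans (hy.tailFrom_succ_subset_vsec hn))

theorem almostSubP_of_almostSub (hx : Coded x) (hy : Coded y)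
    (h : AlmostSub (vsec x 0) (vsec y 0)) (hinf : (vsec y 0 \ vsec x 0).Infinite) :
    AlmostSubP x y := by
  obtain ⟨N, hN⟩ := eventually_atTop.1 (hx.eventually_vsec_subset hy h hinf)
  refine finite_of_bddAbove_fst_of_vsec_finite ⟨N, ?_⟩ (hx.vsec_sdiff_vsec_finite hy h)
  rintro _ ⟨⟨n, m⟩, ⟨hpx, hpy⟩, rfl⟩
  by_contra! hlt
  exact hpy (hN n hlt.le hpx)

end Coded

/-- Section coding preserves the linear ordering: if `x, y ∈ Y` with `x_0 ⊊* y_0` then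
`x ⊆* y`; consequently, if the first sections of members of `Y` are linearly ordered by
`⊊*` (distinct mod finite), then `Y` is linearly ordered by `⊆*`. -/
theorem section_coding_linear (Y : Set (Set (ℕ × ℕ))) (hY : ∀ y ∈ Y, Coded y) :
    (∀ x ∈ Y, ∀ y ∈ Y,
      AlmostSub (vsec x 0) (vsec y 0) → (vsec y 0 \ vsec x 0).Infinite → AlmostSubP x y) ∧
    ((∀ x ∈ Y, ∀ y ∈ Y, x = y ∨
        (AlmostSub (vsec x 0) (vsec y 0) ∧ (vsec y 0 \ vsec x 0).Infinite) ∨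
        (AlmostSub (vsec y 0) (vsec x 0) ∧ (vsec x 0 \ vsec y 0).Infinite)) →
      ∀ x ∈ Y, ∀ y ∈ Y, AlmostSubP x y ∨ AlmostSubP y x) := by
  have almostSubP_of_ssubset : ∀ x ∈ Y, ∀ y ∈ Y,
      AlmostSub (vsec x 0) (vsec y 0) → (vsec y 0 \ vsec x 0).Infinite → AlmostSubP x y :=
    fun x hx y hy => (hY x hx).almostSubP_of_almostSub (hY y hy)
  refine ⟨almostSubP_of_ssubset, fun hlin x hx y hy => ?_⟩
  rcases hlin x hx y hy with rfl | ⟨h, hinf⟩ | ⟨h, hinf⟩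
  · exact Or.inl (by simp [AlmostSubP])
  · exact Or.inl (almostSubP_of_ssubset x hx y hy h hinf)
  · exact Or.inr (almostSubP_of_ssubset y hy x hx h hinf)
end

section
/- If X ⊆ [ω]^ω is a Σ^1_2 inextendible linearly ordered tower and there is no analytic inextendible linearly ordered tower, then X has a cofinal subset of size ω₁: writing X = ⋃_{ξ<ω₁} B_ξ as a union of ω₁ Borel sets, each B_ξ (being a Borel subset of a ⊆*-linear order without being inextendible itself) has a lower bound x_ξ ∈ X, and {x_ξ : ξ < ω₁} is cofinal in X. -/
/-- `X` is `Σ¹₂`: the projection of a coanalytic subset of `Cantor × ω^ω`. -/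
def IsSigma12 (X : Set Cantor) : Prop :=
  ∃ Y : Set (Cantor × (ℕ → ℕ)), MeasureTheory.AnalyticSet Yᶜ ∧
    X = {x | ∃ w, (x, w) ∈ Y}

/-- `X` is an inextendible linearly ordered tower (ilt): a set of infinite subsets of `ω`,
linearly ordered by `⊆*`, with no pseudointersection. -/
def IsIlt (X : Set Cantor) : Prop :=
  (∀ x ∈ X, (cset x).Infinite) ∧
  (∀ x ∈ X, ∀ y ∈ X, AlmostSub (cset x) (cset y) ∨ AlmostSub (cset y) (cset x)) ∧
  ¬ ∃ z : Set ℕ, z.Infinite ∧ ∀ x ∈ X, AlmostSub z (cset x)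


/-!
A coanalytic set is a union of `ℵ₁` analytic sets. Write its complement as `range F` for a
continuous `F : (ℕ → ℕ) → Z`. A point `y` lies outside `range F` exactly when the tree of finite
sequences `s` with `y ∈ closure (F '' [s])` has no infinite branch, i.e. is well-founded; its
rank function then lives below a countable ordinal `o`, and for each fixed `o` the points
admitting such a rank function, coded by a real, form an analytic set.

Projecting, the `Σ¹₂` ilt `X` is a union of `ℵ₁` analytic pieces. No piece is an ilt, so each
has a pseudointersection, and since `X` is linear without one, some element of `X` lies
`⊆*`-below the whole piece. These lower bounds are cofinal in `X`; a cofinal subset of an ilt is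
an ilt, and countable sets are analytic, so there are exactly `ℵ₁` of them.
-/

open Set Cardinal Ordinal PiNat MeasureTheory

theorem IsWellFounded.rank_lt_omega_one {β : Type*} [Countable β] (r : β → β → Prop)
    [IsWellFounded β r] (a : β) : IsWellFounded.rank r a < ω₁ := by
  induction a using IsWellFounded.induction r with
  | _ a ih =>
  rw [IsWellFounded.rank_eq]
  exact iSup_lt_omega_one fun b => (isSuccLimit_omega 1).succ_lt (ih b b.2)

theorem exists_enum_Iio_of_lt_omega_one :
    ∃ d : Ordinal.{0} → ℕ → Ordinal.{0}, ∀ o < ω₁, Iio o ⊆ range (d o) := by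
  have h : ∀ o : Ordinal.{0}, ∃ f : ℕ → Ordinal.{0}, o < ω₁ → Iio o ⊆ range f := by
    intro o
    by_cases ho : o < ω₁
    · have hc : (Iio o).Countable := by
        rw [← le_aleph0_iff_set_countable, Cardinal.mk_Iio_ordinal, lift_le_aleph0,
          ← lt_aleph_one_iff, ← lt_ord, ord_aleph]
        exact ho
      obtain ⟨f, hf⟩ := countable_iff_exists_subset_range.1 hc
      exact ⟨f, fun _ => hf⟩
    · exact ⟨fun _ => 0, fun h => absurd h ho⟩
  choose d hd using h
  exact ⟨d, hd⟩

theorem exists_lt_omega_one_forall_rel_lt {d : Ordinal.{0} → ℕ → Ordinal.{0}}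
    (hd : ∀ o < ω₁, Iio o ⊆ range (d o)) {β : Type} [Countable β] (r : β → β → Prop)
    [IsWellFounded β r] : ∃ o < ω₁, ∃ f : β → ℕ, ∀ a b, r a b → d o (f a) < d o (f b) := by
  set o := ⨆ a, Order.succ (IsWellFounded.rank r a)
  have ho : o < ω₁ := iSup_lt_omega_one fun a =>
    (isSuccLimit_omega 1).succ_lt (IsWellFounded.rank_lt_omega_one r a)
  have hrank : ∀ a, IsWellFounded.rank r a < o := fun a =>
    (Order.lt_succ _).trans_le (Ordinal.le_iSup (Order.succ ∘ IsWellFounded.rank r) a)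
  choose f hf using fun a => hd o ho (hrank a)
  refine ⟨o, ho, f, fun a b hab => ?_⟩
  rw [hf, hf]
  exact IsWellFounded.rank_lt_of_rel hab

section Tree

variable {Z : Type*} [TopologicalSpace Z] (F : (ℕ → ℕ) → Z) (y : Z)

/-- Finite sequences are listed in reverse, as in `PiNat.res`: `n :: s` extends `s` by `n`. -/
def approxTree : Set (List ℕ) := {s | y ∈ closure (F '' {g | res g s.length = s})}

def TreeChild (t s : List ℕ) : Prop := t ∈ approxTree F y ∧ ∃ n, t = n :: s

variable {F y}

theorem mem_approxTree_of_cons_mem {n : ℕ} {s : List ℕ} (h : n :: s ∈ approxTree F y) :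
    s ∈ approxTree F y :=
  closure_mono (image_mono fun _ hg => (List.cons.inj hg).2) h

theorem res_mem_approxTree (g : ℕ → ℕ) (n : ℕ) : res g n ∈ approxTree F (F g) :=
  subset_closure ⟨g, by rw [mem_ofPred_eq, res_length], rfl⟩

theorem eq_of_forall_res_mem_approxTree [T2Space Z] (hF : Continuous F) {g : ℕ → ℕ}
    (h : ∀ n, res g n ∈ approxTree F y) : F g = y := by
  by_contra hne
  obtain ⟨U, W, hU, hW, hgU, hyW, hUW⟩ := t2_separation hne
  obtain ⟨_, ⟨x, n, rfl⟩, hgx, hxU⟩ :=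
    (isTopologicalBasis_cylinders _).exists_subset_of_mem_open hgU (hU.preimage hF)
  have hcyl : F '' {g' | res g' (res g n).length = res g n} ⊆ U := by
    rw [res_length, ← cylinder_eq_res, mem_cylinder_iff_eq.1 hgx, image_subset_iff]
    exact hxU
  exact (hUW.closure_left hW).notMem_of_mem_right hyW (closure_mono hcyl (h n))

theorem TreeChild.wellFounded_of_acc_nil (h : Acc (TreeChild F y) []) :
    WellFounded (TreeChild F y) := by
  refine ⟨fun s => ?_⟩
  induction s with
  | nil => exact h
  | cons n s ih =>
    by_cases hs : n :: s ∈ approxTree F y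
    · exact ih.inv ⟨hs, n, rfl⟩
    · exact ⟨_, fun _ ⟨ht, _, hts⟩ => absurd (mem_approxTree_of_cons_mem (hts ▸ ht)) hs⟩

theorem exists_forall_res_mem_approxTree_of_not_acc_nil (h : ¬ Acc (TreeChild F y) []) :
    ∃ g : ℕ → ℕ, ∀ n, res g n ∈ approxTree F y := by
  have hstep : ∀ s : {s // ¬ Acc (TreeChild F y) s},
      ∃ n, n :: s.1 ∈ approxTree F y ∧ ¬ Acc (TreeChild F y) (n :: s.1) := by
    rintro ⟨s, hs⟩
    by_contra! hacc
    exact hs ⟨s, fun _ ⟨ht, n, hts⟩ => hts ▸ hacc n (hts ▸ ht)⟩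
  choose next hnext_mem hnext_acc using hstep
  let path : ℕ → {s // ¬ Acc (TreeChild F y) s} :=
    fun k => (fun s => ⟨_, hnext_acc s⟩)^[k] ⟨[], h⟩
  have hpath : ∀ k, (path k).1 = res (fun k => next (path k)) k := by
    intro k
    induction k with
    | zero => rfl
    | succ k ih =>
      rw [res_succ, ← ih]
      exact congrArg Subtype.val (Function.iterate_succ_apply' _ k _)
  refine ⟨fun k => next (path k), fun k => mem_approxTree_of_cons_mem (n := next (path k)) ?_⟩
  rw [← hpath]
  exact hnext_mem (path k)

theorem wellFounded_treeChild_iff [T2Space Z] (hF : Continuous F) :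
    WellFounded (TreeChild F y) ↔ y ∉ range F := by
  constructor
  · rintro hwf ⟨g, rfl⟩
    have : IsWellFounded _ (TreeChild F (F g)) := ⟨hwf⟩
    obtain ⟨n, hn⟩ := WellFounded.not_rel_apply_succ (r := TreeChild F (F g)) (res g)
    exact hn ⟨res_mem_approxTree g (n + 1), g n, rfl⟩
  · intro hy
    by_contra hwf
    obtain ⟨g, hg⟩ := exists_forall_res_mem_approxTree_of_not_acc_nil
      (mt TreeChild.wellFounded_of_acc_nil hwf)
    exact hy ⟨g, eq_of_forall_res_mem_approxTree hF hg⟩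

end Tree

section Coding

variable {Z : Type*} [TopologicalSpace Z] (F : (ℕ → ℕ) → Z)

/-- `c` codes, through the enumeration `d` of ordinals, a rank function on `approxTree F y`. -/
def rankCodes (d : ℕ → Ordinal.{0}) : Set (Z × (List ℕ → ℕ)) :=
  {p | ∀ t s, TreeChild F p.1 t s → d (p.2 t) < d (p.2 s)}

variable {F}

theorem measurableSet_rankCodes [MeasurableSpace Z] [OpensMeasurableSpace Z]
    (d : ℕ → Ordinal.{0}) : MeasurableSet (rankCodes F d) := by
  simp only [rankCodes, ofPred_forall]
  refine .iInter fun t => .iInter fun s => .imp ?_ ?_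
  · exact (isClosed_closure.preimage continuous_fst).measurableSet.inter (.const _)
  · have hq : MeasurableSet {q : ℕ × ℕ | d q.1 < d q.2} := .of_discrete
    have hm : Measurable fun c : List ℕ → ℕ => (c t, c s) :=
      (measurable_pi_apply t).prodMk (measurable_pi_apply s)
    exact measurable_snd (hq.preimage hm)

theorem compl_range_eq_iUnion_image_rankCodes [T2Space Z] (hF : Continuous F)
    {d : Ordinal.{0} → ℕ → Ordinal.{0}} (hd : ∀ o < ω₁, Iio o ⊆ range (d o)) :
    (range F)ᶜ = ⋃ o : Iio ω₁, Prod.fst '' rankCodes F (d o) := by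
  ext y
  rw [mem_compl_iff, ← wellFounded_treeChild_iff hF, mem_iUnion]
  constructor
  · intro hwf
    have : IsWellFounded _ (TreeChild F y) := ⟨hwf⟩
    obtain ⟨o, ho, c, hc⟩ := exists_lt_omega_one_forall_rel_lt hd (TreeChild F y)
    exact ⟨⟨o, ho⟩, (y, c), hc, rfl⟩
  · rintro ⟨o, ⟨y, c⟩, hc, rfl⟩
    exact Subrelation.wf (hc _ _) (InvImage.wf (d o ∘ c) wellFounded_lt)

end Coding

theorem exists_iUnion_eq_of_analyticSet_compl {Z : Type*} [TopologicalSpace Z] [PolishSpace Z]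
    {s : Set Z} (hs : AnalyticSet sᶜ) :
    ∃ A : Iio (ω₁ : Ordinal.{0}) → Set Z, (∀ o, AnalyticSet (A o)) ∧ s = ⋃ o, A o := by
  rw [AnalyticSet] at hs
  rcases hs with hs | ⟨F, hF, hFs⟩
  · refine ⟨fun _ => univ, fun _ => isClosed_univ.analyticSet, ?_⟩
    have : Nonempty (Iio (ω₁ : Ordinal.{0})) := ⟨⟨0, omega_pos 1⟩⟩
    rw [iUnion_const, ← compl_empty_iff.1 hs]
  · borelize Z
    obtain ⟨d, hd⟩ := exists_enum_Iio_of_lt_omega_one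
    refine ⟨fun o => Prod.fst '' rankCodes F (d o), fun o =>
      (measurableSet_rankCodes (d o)).analyticSet.image_of_continuous continuous_fst, ?_⟩
    rw [← compl_range_eq_iUnion_image_rankCodes hF hd, hFs, compl_compl]

theorem AlmostSub.trans {a b c : Set ℕ} (hab : AlmostSub a b) (hbc : AlmostSub b c) :
    AlmostSub a c :=
  (hab.union hbc).subset (sdiff_triangle a b c)

namespace IsIlt

variable {X : Set Cantor}

theorem exists_almostSub_of_not_isIlt {B : Set Cantor} (hX : IsIlt X) (hBX : B ⊆ X)
    (hB : ¬ IsIlt B) : ∃ x ∈ X, ∀ b ∈ B, AlmostSub (cset x) (cset b) := by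
  obtain ⟨hinf, hlin, hnopi⟩ := hX
  obtain ⟨z, hz, hzB⟩ : ∃ z : Set ℕ, z.Infinite ∧ ∀ b ∈ B, AlmostSub z (cset b) := by
    by_contra h
    exact hB ⟨fun b hb => hinf b (hBX hb), fun a ha b hb => hlin a (hBX ha) b (hBX hb), h⟩
  by_contra! h
  refine hnopi ⟨z, hz, fun x hx => ?_⟩
  obtain ⟨b, hb, hxb⟩ := h x hx
  exact (hzB b hb).trans ((hlin x hx b (hBX hb)).resolve_left hxb)

theorem of_cofinal {Y : Set Cantor} (hX : IsIlt X) (hYX : Y ⊆ X)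
    (hY : ∀ x ∈ X, ∃ y ∈ Y, AlmostSub (cset y) (cset x)) : IsIlt Y := by
  refine ⟨fun y hy => hX.1 y (hYX hy), fun a ha b hb => hX.2.1 a (hYX ha) b (hYX hb), ?_⟩
  rintro ⟨z, hz, hzY⟩
  refine hX.2.2 ⟨z, hz, fun x hx => ?_⟩
  obtain ⟨y, hy, hyx⟩ := hY x hx
  exact (hzY y hy).trans hyx

end IsIlt

/-- If `X` is a `Σ¹₂` ilt and no analytic set is an ilt, then `X` has a cofinal subset of
size `ω₁`. -/
theorem sigma12_ilt_cofinal_omega1 (X : Set Cantor)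
    (hX : IsSigma12 X) (hilt : IsIlt X)
    (hnoan : ∀ A : Set Cantor, MeasureTheory.AnalyticSet A → ¬ IsIlt A) :
    ∃ Y : Set Cantor, Y ⊆ X ∧ Cardinal.mk Y = Cardinal.aleph 1 ∧
      ∀ x ∈ X, ∃ y ∈ Y, AlmostSub (cset y) (cset x) := by
  obtain ⟨Y, hY, hXY⟩ := hX
  -- instance search finds `PolishSpace Cantor` only once this is in the context
  have : PolishSpace Bool := inferInstance
  obtain ⟨A, hA, rfl⟩ := exists_iUnion_eq_of_analyticSet_compl hY
  have hAX : ∀ o, Prod.fst '' A o ⊆ X := by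
    rintro o _ ⟨⟨x, w⟩, hxw, rfl⟩
    rw [hXY]
    exact ⟨w, mem_iUnion_of_mem o hxw⟩
  choose lb hlbX hlb using fun o => hilt.exists_almostSub_of_not_isIlt (hAX o)
    (hnoan _ ((hA o).image_of_continuous continuous_fst))
  have hcof : ∀ x ∈ X, ∃ y ∈ range lb, AlmostSub (cset y) (cset x) := by
    intro x hx
    rw [hXY] at hx
    obtain ⟨w, hw⟩ := hx
    obtain ⟨o, ho⟩ := mem_iUnion.1 hw
    exact ⟨lb o, mem_range_self o, hlb o x ⟨_, ho, rfl⟩⟩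
  have hunc : ¬ (range lb).Countable := fun hc =>
    hnoan _ hc.measurableSet.analyticSet (hilt.of_cofinal (range_subset_iff.2 hlbX) hcof)
  refine ⟨range lb, range_subset_iff.2 hlbX, le_antisymm ?_ ?_, hcof⟩
  · have := mk_range_le_lift (f := lb)
    rwa [Cardinal.mk_Iio_ordinal, card_omega, Cardinal.lift_lift, Cardinal.lift_le] at this
  · rw [← le_aleph0_iff_set_countable, ← lt_aleph_one_iff] at hunc
    exact not_lt.1 hunc
end
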